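/- arXiv:1302.0050 — 5 statements merged into one kernel-verified Lean document; each statement's English description precedes it below -/
import Mathlib

section
/- Matching condition I: let (V*, W*) be a saddle point with φ(V*,W*) = max_{W ∈ 𝒲₁(E)} min_{V ∈ 𝒱(E,D)} φ(V,W), and suppose that V̂ := argmin_{V ∈ 𝒱(W*,D)} φ(V,W*) belongs to 𝒱(E,D). Then R_m(D|E) = φ(V*,W*) = max_{W ∈ 𝒲₁(E)} min_{V ∈ 𝒱(E,D)} φ(V,W). -/
open scoped BigOperators

noncomputable section

namespace UWZ

/-- real-valued indicator of a proposition. -/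
def ind (p : Prop) : ℝ := @ite ℝ p (Classical.propDecidable p) 1 0

/-- `P` is a probability distribution on the finite type `A`. -/
def IsDist {A : Type*} [Fintype A] (P : A → ℝ) : Prop :=
  (∀ a, 0 ≤ P a) ∧ ∑ a, P a = 1

/-- `W` is a channel from `A` to `B`. -/
def IsChannel {A B : Type*} [Fintype A] [Fintype B] (W : A → B → ℝ) : Prop :=
  ∀ a, IsDist (W a)

/-- the `n`-fold i.i.d. extension of `P`. -/
def iid {A : Type*} (P : A → ℝ) (n : ℕ) (xs : Fin n → A) : ℝ := ∏ t, P (xs t)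

/-- the memoryless (`n`-fold i.i.d.) extension of a channel. -/
def memoryless {A B : Type*} (W : A → B → ℝ) (n : ℕ)
    (xs : Fin n → A) (ys : Fin n → B) : ℝ :=
  ∏ t, W (xs t) (ys t)

/-- the additive (per-letter, normalized) extension of a distortion measure. -/
def dseq {A B : Type*} (d : A → B → ℝ) (n : ℕ) (xs : Fin n → A) (ys : Fin n → B) : ℝ :=
  (∑ t, d (xs t) (ys t)) / n

/-- Shannon entropy (in bits). -/
def ent {A : Type*} [Fintype A] (P : A → ℝ) : ℝ := -∑ a, P a * Real.logb 2 (P a)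

/-- mutual information of a joint distribution on `A × B` (in bits). -/
def mutInf {A B : Type*} [Fintype A] [Fintype B] (J : A × B → ℝ) : ℝ :=
  ent (fun a => ∑ b, J (a, b)) + ent (fun b => ∑ a, J (a, b)) - ent J

section WZ

variable {X Y Xh : Type*} [Fintype X] [Fintype Y] [Fintype Xh] [DecidableEq Y]

/-- expected per-letter side-information distortion `e(P,W)` of channel `W`. -/
def eDist (P : X → ℝ) (e : X → Y → ℝ) (W : X → Y → ℝ) : ℝ :=
  ∑ x, ∑ y, P x * W x y * e x y

/-- the class `𝒲₁(E)` of single-letter channels. -/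
def W1 (P : X → ℝ) (e : X → Y → ℝ) (E : ℝ) : Set (X → Y → ℝ) :=
  {W | IsChannel W ∧ eDist P e W ≤ E}

/-- `d(V,W)`: expected reproduction distortion for a test channel `V` whose output
alphabet `𝒰` is the set of functions from `Y` to `Xh`. -/
def dVW (P : X → ℝ) (d : X → Xh → ℝ) (V : X → (Y → Xh) → ℝ) (W : X → Y → ℝ) : ℝ :=
  ∑ u : Y → Xh, ∑ x, ∑ y, P x * V x u * W x y * d x (u y)

/-- `φ(V,W) = I(U;X) − I(U;Y)` under the joint law `P_X(x)V(u|x)W(y|x)`. -/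
def phi (P : X → ℝ) (V : X → (Y → Xh) → ℝ) (W : X → Y → ℝ) : ℝ :=
  mutInf (fun p : (Y → Xh) × X => P p.2 * V p.2 p.1) -
    mutInf (fun p : (Y → Xh) × Y => ∑ x, P x * V x p.1 * W x p.2)

/-- `𝒱(W,D)`. -/
def Vset (P : X → ℝ) (d : X → Xh → ℝ) (W : X → Y → ℝ) (D : ℝ) :
    Set (X → (Y → Xh) → ℝ) :=
  {V | IsChannel V ∧ dVW P d V W ≤ D}

/-- `𝒱(E,D)`. -/
def Vrob (P : X → ℝ) (e : X → Y → ℝ) (d : X → Xh → ℝ) (E D : ℝ) :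
    Set (X → (Y → Xh) → ℝ) :=
  {V | IsChannel V ∧ ∀ W ∈ W1 P e E, dVW P d V W ≤ D}

/-- the Wyner–Ziv rate-distortion function `R_WZ(D|W)`. -/
def RWZ (P : X → ℝ) (d : X → Xh → ℝ) (D : ℝ) (W : X → Y → ℝ) : ℝ :=
  sInf ((fun V => phi P V W) '' Vset P d W D)

/-- the pseudo rate-distortion function `R̃_WZ(D|W,E)`. -/
def RWZt (P : X → ℝ) (e : X → Y → ℝ) (d : X → Xh → ℝ) (D E : ℝ) (W : X → Y → ℝ) : ℝ :=
  sInf ((fun V => phi P V W) '' Vrob P e d E D)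

end WZ

/-- a (possibly stochastic) Wyner–Ziv code of blocklength `n`:
a stochastic encoder `enc : 𝒳ⁿ → ℳ` and a decoder `dec : ℳ × 𝒴ⁿ → 𝒳̂ⁿ`. -/
structure Code (X Y Xh : Type*) [Fintype X] (n : ℕ) where
  M : ℕ
  Mpos : 0 < M
  enc : (Fin n → X) → Fin M → ℝ
  enc_channel : IsChannel enc
  dec : Fin M → (Fin n → Y) → Fin n → Xh

section Codes

variable {X Y Xh : Type*} [Fintype X] [Fintype Y] [Fintype Xh]

/-- expected reproduction distortion of a code over the channel `Wn`. -/
def Code.expDist {n : ℕ} (C : Code X Y Xh n) (P : X → ℝ) (d : X → Xh → ℝ)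
    (Wn : (Fin n → X) → (Fin n → Y) → ℝ) : ℝ :=
  ∑ xs, ∑ ys, ∑ m, iid P n xs * Wn xs ys * C.enc xs m * dseq d n xs (C.dec m ys)

/-- probability that the reproduction distortion of a code exceeds `D`, over channel `Wn`. -/
def Code.excessProb {n : ℕ} (C : Code X Y Xh n) (P : X → ℝ) (d : X → Xh → ℝ)
    (Wn : (Fin n → X) → (Fin n → Y) → ℝ) (D : ℝ) : ℝ :=
  ∑ xs, ∑ ys, ∑ m, iid P n xs * Wn xs ys * C.enc xs m * ind (D < dseq d n xs (C.dec m ys))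

/-- a sequence of channels from `X`-sequences to `Y`-sequences. -/
abbrev ChannelSeq (X Y : Type*) := ∀ n : ℕ, (Fin n → X) → (Fin n → Y) → ℝ

/-- probability that the side-information distortion exceeds `E`. -/
def excessSideProb (P : X → ℝ) (e : X → Y → ℝ) {n : ℕ}
    (Wn : (Fin n → X) → (Fin n → Y) → ℝ) (E : ℝ) : ℝ :=
  ∑ xs, ∑ ys, iid P n xs * Wn xs ys * ind (E < dseq e n xs ys)

/-- expected side-information distortion at blocklength `n`. -/
def avgSideDist (P : X → ℝ) (e : X → Y → ℝ) {n : ℕ}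
    (Wn : (Fin n → X) → (Fin n → Y) → ℝ) : ℝ :=
  ∑ xs, ∑ ys, iid P n xs * Wn xs ys * dseq e n xs ys

/-- the maximum distortion constrained class `𝒲_m(E)`. -/
def MaxClass (P : X → ℝ) (e : X → Y → ℝ) (E : ℝ) : Set (ChannelSeq X Y) :=
  {Wseq | (∀ n, IsChannel (Wseq n)) ∧
    ∀ δ > (0:ℝ), ∃ n0 : ℕ, ∀ n ≥ n0, excessSideProb P e (Wseq n) E ≤ δ}

/-- the average distortion constrained class `𝒲_a(E)`. -/
def AvgClass (P : X → ℝ) (e : X → Y → ℝ) (E : ℝ) : Set (ChannelSeq X Y) :=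
  {Wseq | (∀ n, IsChannel (Wseq n)) ∧ ∀ n, 1 ≤ n → avgSideDist P e (Wseq n) ≤ E}

/-- `R` is an achievable rate at distortion level `D`, universally for the class `WC`
of channel sequences. -/
def Achievable (P : X → ℝ) (d : X → Xh → ℝ) (WC : Set (ChannelSeq X Y)) (D R : ℝ) : Prop :=
  ∀ ε > (0:ℝ), ∃ n0 : ℕ, ∃ C : ∀ n, Code X Y Xh n, ∀ n ≥ n0,
    Real.logb 2 ((C n).M : ℝ) / (n : ℝ) ≤ R + ε ∧
    ∀ Wseq ∈ WC, (C n).expDist P d (Wseq n) ≤ D + ε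

/-- the rate-distortion function `R_m(D|E)` of the maximum distortion constrained class. -/
def Rm (P : X → ℝ) (e : X → Y → ℝ) (d : X → Xh → ℝ) (D E : ℝ) : ℝ :=
  sInf {R | Achievable P d (MaxClass P e E) D R}

/-- the rate-distortion function `R_a(D|E)` of the average distortion constrained class. -/
def Ra (P : X → ℝ) (e : X → Y → ℝ) (d : X → Xh → ℝ) (D E : ℝ) : ℝ :=
  sInf {R | Achievable P d (AvgClass P e E) D R}

end Codes

/-- a Heegard–Berger code: one encoder and two decoders. -/
structure HBCode (X Y Xh : Type*) (n : ℕ) where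
  M : ℕ
  Mpos : 0 < M
  enc : (Fin n → X) → Fin M
  dec1 : Fin M → (Fin n → Y) → Fin n → Xh
  dec2 : Fin M → (Fin n → Y) → Fin n → Xh

section HB

variable {X Y Xh : Type*} [Fintype X] [Fintype Y] [Fintype Xh]

/-- expected distortion of one branch of a Heegard–Berger code over the memoryless
extension of the single-letter channel `W`. -/
def hbExpDist {n M : ℕ} (P : X → ℝ) (d : X → Xh → ℝ) (W : X → Y → ℝ)
    (enc : (Fin n → X) → Fin M) (dec : Fin M → (Fin n → Y) → Fin n → Xh) : ℝ :=
  ∑ xs, ∑ ys, iid P n xs * memoryless W n xs ys * dseq d n xs (dec (enc xs) ys)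

/-- achievability for the Heegard–Berger problem with side-information channels `W₁, W₂`. -/
def HBAchievable (P : X → ℝ) (d : X → Xh → ℝ) (W₁ W₂ : X → Y → ℝ) (D₁ D₂ R : ℝ) : Prop :=
  ∀ ε > (0:ℝ), ∃ n0 : ℕ, ∃ C : ∀ n, HBCode X Y Xh n, ∀ n ≥ n0,
    Real.logb 2 ((C n).M : ℝ) / (n : ℝ) ≤ R + ε ∧
    hbExpDist P d W₁ (C n).enc (C n).dec1 ≤ D₁ + ε ∧
    hbExpDist P d W₂ (C n).enc (C n).dec2 ≤ D₂ + ε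

/-- the Heegard–Berger rate-distortion function `R_HB(D₁,D₂|W₁,W₂)`. -/
def RHB (P : X → ℝ) (d : X → Xh → ℝ) (W₁ W₂ : X → Y → ℝ) (D₁ D₂ : ℝ) : ℝ :=
  sInf {R | HBAchievable P d W₁ W₂ D₁ D₂ R}

end HB

/-- the classical (no side-information) rate-distortion function `R(D)`. -/
def RD {X Xh : Type*} [Fintype X] [Fintype Xh] (P : X → ℝ) (d : X → Xh → ℝ) (D : ℝ) : ℝ :=
  sInf ((fun Q : X → Xh → ℝ => mutInf fun p : X × Xh => P p.1 * Q p.1 p.2) ''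
    {Q | IsChannel Q ∧ (∑ x, ∑ xh, P x * Q x xh * d x xh) ≤ D})

section Types

variable {X Y : Type*} [Fintype X] [Fintype Y] [DecidableEq X] [DecidableEq Y]

/-- the empirical distribution (type) `P_{x^n}` of a sequence. -/
def empDist {n : ℕ} (xs : Fin n → X) (a : X) : ℝ :=
  ((Finset.univ.filter fun t => xs t = a).card : ℝ) / n

/-- the joint empirical distribution (joint type) of a pair of sequences. -/
def empJoint {n : ℕ} (xs : Fin n → X) (ys : Fin n → Y) (p : X × Y) : ℝ :=
  ((Finset.univ.filter fun t => xs t = p.1 ∧ ys t = p.2).card : ℝ) / n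

/-- `x^n` is `P`-typical with constant `δ`. -/
def isTypical {n : ℕ} (P : X → ℝ) (δ : ℝ) (xs : Fin n → X) : Prop :=
  (∀ a, |empDist xs a - P a| ≤ δ) ∧ ∀ t, P (xs t) ≠ 0

/-- `y^n` lies in the `W`-shell `T_W(x^n)` of `x^n`. -/
def inShell {n : ℕ} (xs : Fin n → X) (ys : Fin n → Y) (W : X → Y → ℝ) : Prop :=
  ∀ a b, empJoint xs ys (a, b) = empDist xs a * W a b

/-- cardinality of the `W`-shell of `x^n`. -/
def shellCard {n : ℕ} (xs : Fin n → X) (W : X → Y → ℝ) : ℕ :=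
  Set.ncard {ys : Fin n → Y | inShell xs ys W}

end Types

/-- `W` is a conditional type with denominator `n` (all entries are multiples of `1/n`). -/
def isCondType {X Y : Type*} (n : ℕ) (W : X → Y → ℝ) : Prop :=
  ∀ x y, ∃ k : ℕ, W x y = (k : ℝ) / n

section Perm

variable {X Y Xh : Type*} [Fintype X] [Fintype Y] [Fintype Xh]

/-- probability, under the permuted source/side-information pair, that the reproduction
distortion of the code `C` exceeds `D`. -/
def permExcess {n : ℕ} (Pxy : (Fin n → X) × (Fin n → Y) → ℝ) (C : Code X Y Xh n)
    (d : X → Xh → ℝ) (D : ℝ) (π : Equiv.Perm (Fin n)) : ℝ :=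
  ∑ p : (Fin n → X) × (Fin n → Y), ∑ m,
    Pxy p * C.enc (p.1 ∘ π) m * ind (D < dseq d n (p.1 ∘ π) (C.dec m (p.2 ∘ π)))

end Perm

/-! The direct bound of Theorem 1 at the saddle value gives `R_m ≤ φ(V*,W*)`. Conversely, the
matching condition `V̂ ∈ 𝒱(E,D)` and the saddle inequality in `V` give
`φ(V*,W*) ≤ φ(V̂,W*) = R_WZ(D|W*)`, which the converse bound dominates by `R_m`. As `sInf`/`sSup`
on `ℝ` are junk on unbounded sets, this needs `φ(·,W)` bounded below (entropies on finite
alphabets are bounded) and `R_WZ(D|·)` bounded above on `𝒲₁(E)`, by `φ(V*,·) ≤ φ(V*,W*)`. -/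

section Entropy

variable {A B C : Type*} [Fintype A] [Fintype B] [Fintype C]

lemma IsDist.le_one {P : A → ℝ} (hP : IsDist P) (a : A) : P a ≤ 1 :=
  hP.2 ▸ Finset.single_le_sum (fun b _ => hP.1 b) (Finset.mem_univ a)

lemma IsDist.sum_mul_channel {P : A → ℝ} (hP : IsDist P) {K : A → B → ℝ} (hK : IsChannel K) :
    IsDist fun b => ∑ a, P a * K a b := by
  refine ⟨fun b => Finset.sum_nonneg fun a _ => mul_nonneg (hP.1 a) ((hK a).1 b), ?_⟩
  rw [Finset.sum_comm]
  simp only [← Finset.mul_sum, (hK _).2, mul_one, hP.2]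

lemma IsDist.joint {P : A → ℝ} (hP : IsDist P) {V : A → B → ℝ} (hV : IsChannel V) :
    IsDist fun p : B × A => P p.2 * V p.2 p.1 := by
  refine ⟨fun p => mul_nonneg (hP.1 p.2) ((hV p.2).1 p.1), ?_⟩
  rw [Fintype.sum_prod_type, Finset.sum_comm]
  simp only [← Finset.mul_sum, (hV _).2, mul_one, hP.2]

lemma IsChannel.prod {V : A → B → ℝ} (hV : IsChannel V) {W : A → C → ℝ} (hW : IsChannel W) :
    IsChannel fun a (p : B × C) => V a p.1 * W a p.2 := fun a => by
  refine ⟨fun p => mul_nonneg ((hV a).1 p.1) ((hW a).1 p.2), ?_⟩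
  rw [Fintype.sum_prod_type]
  simp only [← Finset.mul_sum, (hW a).2, mul_one, (hV a).2]

lemma IsDist.fst {J : A × B → ℝ} (hJ : IsDist J) : IsDist fun a => ∑ b, J (a, b) :=
  ⟨fun a => Finset.sum_nonneg fun b _ => hJ.1 _, by rw [← Fintype.sum_prod_type, hJ.2]⟩

lemma IsDist.snd {J : A × B → ℝ} (hJ : IsDist J) : IsDist fun b => ∑ a, J (a, b) :=
  ⟨fun b => Finset.sum_nonneg fun a _ => hJ.1 _, by
    rw [Finset.sum_comm, ← Fintype.sum_prod_type, hJ.2]⟩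

lemma ent_eq_sum_negMulLog (P : A → ℝ) :
    ent P = (∑ a, Real.negMulLog (P a)) / Real.log 2 := by
  simp only [ent, Real.logb, Real.negMulLog, Finset.sum_div, ← Finset.sum_neg_distrib]
  exact Finset.sum_congr rfl fun a _ => by ring

lemma IsDist.ent_nonneg {P : A → ℝ} (hP : IsDist P) : 0 ≤ ent P := by
  rw [ent_eq_sum_negMulLog]
  exact div_nonneg (Finset.sum_nonneg fun a _ => Real.negMulLog_nonneg (hP.1 a) (hP.le_one a))
    (Real.log_nonneg one_le_two)

lemma ent_le_card_div_log_two {P : A → ℝ} (hP : ∀ a, 0 ≤ P a) :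
    ent P ≤ Fintype.card A / Real.log 2 := by
  rw [ent_eq_sum_negMulLog]
  gcongr
  calc ∑ a, Real.negMulLog (P a) ≤ ∑ _a : A, (1 : ℝ) :=
        Finset.sum_le_sum fun a _ =>
          (Real.negMulLog_le_one_sub_self (hP a)).trans (by linarith [hP a])
    _ = Fintype.card A := by simp

lemma IsDist.neg_ent_le_mutInf {J : A × B → ℝ} (hJ : IsDist J) : -ent J ≤ mutInf J := by
  have := hJ.fst.ent_nonneg
  have := hJ.snd.ent_nonneg
  unfold mutInf
  linarith

lemma IsDist.mutInf_le {J : A × B → ℝ} (hJ : IsDist J) :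
    mutInf J ≤ Fintype.card A / Real.log 2 + Fintype.card B / Real.log 2 := by
  have := ent_le_card_div_log_two hJ.fst.1
  have := ent_le_card_div_log_two hJ.snd.1
  have := hJ.ent_nonneg
  unfold mutInf
  linarith

end Entropy

section WynerZiv

variable {X Y Xh : Type*} [Fintype X] [Fintype Y] [Fintype Xh] [DecidableEq Y]
  {P : X → ℝ} {W : X → Y → ℝ}

lemma bddBelow_phi (hP : IsDist P) (hW : IsChannel W) :
    BddBelow ((fun V => phi P V W) '' {V : X → (Y → Xh) → ℝ | IsChannel V}) := by
  refine ⟨-(Fintype.card ((Y → Xh) × X) / Real.log 2 +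
      (Fintype.card (Y → Xh) / Real.log 2 + Fintype.card Y / Real.log 2)), ?_⟩
  rintro _ ⟨V, hV, rfl⟩
  have hJ : IsDist fun p : (Y → Xh) × Y => ∑ x, P x * V x p.1 * W x p.2 := by
    simpa only [mul_assoc] using hP.sum_mul_channel (IsChannel.prod hV hW)
  have hIUX := (hP.joint hV).neg_ent_le_mutInf
  have hHUX := ent_le_card_div_log_two (hP.joint hV).1
  have hIUY := hJ.mutInf_le
  unfold phi
  linarith

lemma Vrob_subset_Vset {e : X → Y → ℝ} {d : X → Xh → ℝ} {D E : ℝ} (hW : W ∈ W1 P e E) :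
    Vrob P e d E D ⊆ Vset P d W D :=
  fun _ hV => ⟨hV.1, hV.2 W hW⟩

lemma RWZ_le_phi {d : X → Xh → ℝ} {D : ℝ} (hP : IsDist P) (hW : IsChannel W)
    {V : X → (Y → Xh) → ℝ} (hV : V ∈ Vset P d W D) : RWZ P d D W ≤ phi P V W :=
  csInf_le ((bddBelow_phi hP hW).mono (Set.image_mono fun _ hV => hV.1)) ⟨V, hV, rfl⟩

lemma RWZ_eq_phi_of_forall_le {d : X → Xh → ℝ} {D : ℝ} {V : X → (Y → Xh) → ℝ}
    (hV : V ∈ Vset P d W D) (hmin : ∀ V' ∈ Vset P d W D, phi P V W ≤ phi P V' W) :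
    RWZ P d D W = phi P V W :=
  IsLeast.csInf_eq ⟨⟨V, hV, rfl⟩, by rintro _ ⟨V', hV', rfl⟩; exact hmin V' hV'⟩

end WynerZiv

theorem matching_condition_I_general
    {X Y Xh : Type*} [Fintype X] [Fintype Y] [Fintype Xh] [DecidableEq Y]
    (P : X → ℝ) (hP : IsDist P)
    (e : X → Y → ℝ)
    (d : X → Xh → ℝ)
    (D E : ℝ)
    -- the converse bound of Theorem 1
    (hlow : sSup ((fun W => RWZ P d D W) '' W1 P e E) ≤ Rm P e d D E)
    -- the direct bound of Theorem 1
    (hup : Rm P e d D E ≤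
      sSup ((fun W => sInf ((fun V => phi P V W) '' Vrob P e d E D)) '' W1 P e E))
    -- the saddle point (V*, W*)
    (Vstar : X → (Y → Xh) → ℝ) (Wstar : X → Y → ℝ)
    (hVstar : Vstar ∈ Vrob P e d E D) (hWstar : Wstar ∈ W1 P e E)
    (hsaddle1 : ∀ V ∈ Vrob P e d E D, phi P Vstar Wstar ≤ phi P V Wstar)
    (hsaddle2 : ∀ W ∈ W1 P e E, phi P Vstar W ≤ phi P Vstar Wstar)
    (hsaddleVal : phi P Vstar Wstar =
      sSup ((fun W => sInf ((fun V => phi P V W) '' Vrob P e d E D)) '' W1 P e E))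
    -- V̂, the minimizer of φ(·,W*) over 𝒱(W*,D), and the matching condition V̂ ∈ 𝒱(E,D)
    (Vhat : X → (Y → Xh) → ℝ) (hVhat : Vhat ∈ Vset P d Wstar D)
    (hVhatMin : ∀ V ∈ Vset P d Wstar D, phi P Vhat Wstar ≤ phi P V Wstar)
    (hmatch : Vhat ∈ Vrob P e d E D) :
    Rm P e d D E = phi P Vstar Wstar ∧
    phi P Vstar Wstar =
      sSup ((fun W => sInf ((fun V => phi P V W) '' Vrob P e d E D)) '' W1 P e E) := by
  have hRWZ_bdd : BddAbove ((fun W => RWZ P d D W) '' W1 P e E) := by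
    refine ⟨phi P Vstar Wstar, ?_⟩
    rintro _ ⟨W, hW, rfl⟩
    exact (RWZ_le_phi hP hW.1 (Vrob_subset_Vset hW hVstar)).trans (hsaddle2 W hW)
  have hlb : phi P Vstar Wstar ≤ Rm P e d D E :=
    calc phi P Vstar Wstar ≤ phi P Vhat Wstar := hsaddle1 Vhat hmatch
      _ = RWZ P d D Wstar := (RWZ_eq_phi_of_forall_le hVhat hVhatMin).symm
      _ ≤ sSup ((fun W => RWZ P d D W) '' W1 P e E) :=
          le_csSup hRWZ_bdd ⟨Wstar, hWstar, rfl⟩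
      _ ≤ Rm P e d D E := hlow
  exact ⟨le_antisymm (hsaddleVal ▸ hup) hlb, hsaddleVal⟩

/-- **matching condition I.** Let `(V*, W*)` be a saddle point of `φ` over
`𝒱(E,D) × 𝒲₁(E)` with `φ(V*,W*) = max_{W ∈ 𝒲₁(E)} min_{V ∈ 𝒱(E,D)} φ(V,W)`, and suppose
that the minimizer `V̂` of `φ(·,W*)` over `𝒱(W*,D)` belongs to `𝒱(E,D)`.  Then
`R_m(D|E) = φ(V*,W*) = max_{W ∈ 𝒲₁(E)} min_{V ∈ 𝒱(E,D)} φ(V,W)`.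
(The two bounds of the paper's Theorem 1 are taken as hypotheses.) -/
theorem matching_condition_I
    {X Y Xh : Type*} [Fintype X] [Fintype Y] [Fintype Xh] [DecidableEq Y]
    [Nonempty X] [Nonempty Y] [Nonempty Xh]
    (P : X → ℝ) (hP : IsDist P)
    (e : X → Y → ℝ) (he0 : ∀ x y, 0 ≤ e x y) (heZ : ∀ x, ∃ y, e x y = 0)
    (d : X → Xh → ℝ) (hd0 : ∀ x xh, 0 ≤ d x xh) (hdZ : ∀ x, ∃ xh, d x xh = 0)
    (D E : ℝ) (hD : 0 ≤ D) (hE : 0 ≤ E)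
    -- the converse bound of Theorem 1
    (hlow : sSup ((fun W => RWZ P d D W) '' W1 P e E) ≤ Rm P e d D E)
    -- the direct bound of Theorem 1
    (hup : Rm P e d D E ≤
      sSup ((fun W => sInf ((fun V => phi P V W) '' Vrob P e d E D)) '' W1 P e E))
    -- the saddle point (V*, W*)
    (Vstar : X → (Y → Xh) → ℝ) (Wstar : X → Y → ℝ)
    (hVstar : Vstar ∈ Vrob P e d E D) (hWstar : Wstar ∈ W1 P e E)
    (hsaddle1 : ∀ V ∈ Vrob P e d E D, phi P Vstar Wstar ≤ phi P V Wstar)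
    (hsaddle2 : ∀ W ∈ W1 P e E, phi P Vstar W ≤ phi P Vstar Wstar)
    (hsaddleVal : phi P Vstar Wstar =
      sSup ((fun W => sInf ((fun V => phi P V W) '' Vrob P e d E D)) '' W1 P e E))
    -- V̂, the minimizer of φ(·,W*) over 𝒱(W*,D), and the matching condition V̂ ∈ 𝒱(E,D)
    (Vhat : X → (Y → Xh) → ℝ) (hVhat : Vhat ∈ Vset P d Wstar D)
    (hVhatMin : ∀ V ∈ Vset P d Wstar D, phi P Vhat Wstar ≤ phi P V Wstar)
    (hmatch : Vhat ∈ Vrob P e d E D) :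
    Rm P e d D E = phi P Vstar Wstar ∧
    phi P Vstar Wstar =
      sSup ((fun W => sInf ((fun V => phi P V W) '' Vrob P e d E D)) '' W1 P e E) :=
  matching_condition_I_general P hP e d D E hlow hup Vstar Wstar hVstar hWstar hsaddle1 hsaddle2
    hsaddleVal Vhat hVhat hVhatMin hmatch

end UWZ
end
end

section
/- Matching condition II: let (V*, W*) be a saddle point with φ(V*,W*) = max_{W ∈ 𝒲₁(E)} min_{V ∈ 𝒱(E,D)} φ(V,W), and let V̂ := argmin_{V ∈ 𝒱(W*,D)} φ(V,W*). If the support of V̂ is contained in the set 𝒰̄ of constant functions, then R_m(D|E) = φ(V*,W*) = max_{W ∈ 𝒲₁(E)} min_{V ∈ 𝒱(E,D)} φ(V,W). -/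
open scoped BigOperators

noncomputable section

namespace UWZ

/-! Because `V̂` only uses constant reproduction functions `u(y) = x̂`, its distortion
`d(V̂,W)` does not see the side information, so `V̂ ∈ 𝒱(W*,D)` already lies in `𝒱(E,D)`.
The saddle inequality then gives `φ(V*,W*) ≤ φ(V̂,W*) = R_WZ(D|W*)`, while `V* ∈ 𝒱(W*,D)`
gives the reverse, so `R_WZ(D|W*) = φ(V*,W*)`. Hence the converse bound of Theorem 1 yields
`R_m(D|E) ≥ φ(V*,W*)`, and the direct bound yields `R_m(D|E) ≤ max min φ = φ(V*,W*)`. -/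

/-- Holds also when `s` is unbounded below, where `sInf s = 0`. -/
theorem sInf_le_max_zero_of_mem {s : Set ℝ} {a : ℝ} (ha : a ∈ s) : sInf s ≤ max a 0 := by
  by_cases hs : BddBelow s
  · exact (csInf_le hs ha).trans (le_max_left _ _)
  · rw [Real.sInf_of_not_bddBelow hs]
    exact le_max_right _ _

section MatchingCondition

variable {X Y Xh : Type*} [Fintype X] [Fintype Y] [Fintype Xh] [DecidableEq Y]

theorem IsDist.sum_mul_const {A : Type*} [Fintype A] {p : A → ℝ} (hp : IsDist p) (c : ℝ) :
    ∑ a, p a * c = c := by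
  rw [← Finset.sum_mul, hp.2, one_mul]

theorem dVW_eq_of_support_const {P : X → ℝ} {d : X → Xh → ℝ} {V : X → (Y → Xh) → ℝ}
    (hV : ∀ x, ∀ u : Y → Xh, V x u ≠ 0 → ∃ c : Xh, ∀ y, u y = c)
    {W W' : X → Y → ℝ} (hW : IsChannel W) (hW' : IsChannel W') :
    dVW P d V W = dVW P d V W' := by
  unfold dVW
  refine Finset.sum_congr rfl fun u _ => Finset.sum_congr rfl fun x _ => ?_
  by_cases hVxu : V x u = 0
  · simp [hVxu]
  obtain ⟨c, hc⟩ := hV x u hVxu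
  have sum_eq : ∀ W : X → Y → ℝ, IsChannel W →
      ∑ y, P x * V x u * W x y * d x (u y) = P x * V x u * d x c := by
    intro W hW
    simp_rw [hc, mul_right_comm _ (W x _), mul_comm _ (W x _)]
    exact (hW x).sum_mul_const _
  rw [sum_eq W hW, sum_eq W' hW']

theorem mem_Vrob_of_support_const {P : X → ℝ} {e : X → Y → ℝ} {d : X → Xh → ℝ}
    {E D : ℝ} {V : X → (Y → Xh) → ℝ} {W : X → Y → ℝ} (hW : IsChannel W)
    (hVW : V ∈ Vset P d W D)
    (hV : ∀ x, ∀ u : Y → Xh, V x u ≠ 0 → ∃ c : Xh, ∀ y, u y = c) :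
    V ∈ Vrob P e d E D :=
  ⟨hVW.1, fun _ hW' => (dVW_eq_of_support_const hV hW'.1 hW).trans_le hVW.2⟩

theorem mem_Vset_of_mem_Vrob {P : X → ℝ} {e : X → Y → ℝ} {d : X → Xh → ℝ} {E D : ℝ}
    {V : X → (Y → Xh) → ℝ} {W : X → Y → ℝ} (hV : V ∈ Vrob P e d E D)
    (hW : W ∈ W1 P e E) : V ∈ Vset P d W D :=
  ⟨hV.1, hV.2 W hW⟩

theorem RWZ_le_max_zero {P : X → ℝ} {d : X → Xh → ℝ} {D : ℝ} {V : X → (Y → Xh) → ℝ}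
    {W : X → Y → ℝ} (hV : V ∈ Vset P d W D) : RWZ P d D W ≤ max (phi P V W) 0 :=
  sInf_le_max_zero_of_mem ⟨V, hV, rfl⟩

end MatchingCondition

theorem matching_condition_II_general
    {X Y Xh : Type*} [Fintype X] [Fintype Y] [Fintype Xh] [DecidableEq Y]
    (P : X → ℝ)
    (e : X → Y → ℝ)
    (d : X → Xh → ℝ)
    (D E : ℝ)
    -- the converse bound of Theorem 1
    (hlow : sSup ((fun W => RWZ P d D W) '' W1 P e E) ≤ Rm P e d D E)
    -- the direct bound of Theorem 1
    (hup : Rm P e d D E ≤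
      sSup ((fun W => sInf ((fun V => phi P V W) '' Vrob P e d E D)) '' W1 P e E))
    -- the saddle point (V*, W*)
    (Vstar : X → (Y → Xh) → ℝ) (Wstar : X → Y → ℝ)
    (hVstar : Vstar ∈ Vrob P e d E D) (hWstar : Wstar ∈ W1 P e E)
    (hsaddle1 : ∀ V ∈ Vrob P e d E D, phi P Vstar Wstar ≤ phi P V Wstar)
    (hsaddle2 : ∀ W ∈ W1 P e E, phi P Vstar W ≤ phi P Vstar Wstar)
    (hsaddleVal : phi P Vstar Wstar =
      sSup ((fun W => sInf ((fun V => phi P V W) '' Vrob P e d E D)) '' W1 P e E))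
    -- V̂, the minimizer of φ(·,W*) over 𝒱(W*,D)
    (Vhat : X → (Y → Xh) → ℝ) (hVhat : Vhat ∈ Vset P d Wstar D)
    (hVhatMin : ∀ V ∈ Vset P d Wstar D, phi P Vhat Wstar ≤ phi P V Wstar)
    -- the support of V̂ consists only of constant functions: supp(V̂) ⊆ 𝒰̄
    (hsupp : ∀ x, ∀ u : Y → Xh, Vhat x u ≠ 0 → ∃ c : Xh, ∀ y, u y = c) :
    Rm P e d D E = phi P Vstar Wstar ∧
    phi P Vstar Wstar =
      sSup ((fun W => sInf ((fun V => phi P V W) '' Vrob P e d E D)) '' W1 P e E) := by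
  have hVhatRob : Vhat ∈ Vrob P e d E D := mem_Vrob_of_support_const hWstar.1 hVhat hsupp
  have hRWZstar : RWZ P d D Wstar = phi P Vstar Wstar := by
    refine IsLeast.csInf_eq ⟨⟨Vstar, mem_Vset_of_mem_Vrob hVstar hWstar, rfl⟩, ?_⟩
    rintro _ ⟨V, hV, rfl⟩
    exact (hsaddle1 Vhat hVhatRob).trans (hVhatMin V hV)
  have hbdd : BddAbove ((fun W => RWZ P d D W) '' W1 P e E) := by
    refine ⟨max (phi P Vstar Wstar) 0, ?_⟩
    rintro _ ⟨W, hW, rfl⟩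
    exact (RWZ_le_max_zero (mem_Vset_of_mem_Vrob hVstar hW)).trans
      (max_le_max_right 0 (hsaddle2 W hW))
  have hlower : phi P Vstar Wstar ≤ Rm P e d D E :=
    hRWZstar ▸ (le_csSup hbdd ⟨Wstar, hWstar, rfl⟩).trans hlow
  exact ⟨le_antisymm (hsaddleVal ▸ hup) hlower, hsaddleVal⟩

/-- **matching condition II.** Let `(V*, W*)` be a saddle point of `φ` over
`𝒱(E,D) × 𝒲₁(E)` with `φ(V*,W*) = max_{W ∈ 𝒲₁(E)} min_{V ∈ 𝒱(E,D)} φ(V,W)`, and let `V̂` be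
the minimizer of `φ(·,W*)` over `𝒱(W*,D)`.  If the support of `V̂` consists only of constant
functions, then `R_m(D|E) = φ(V*,W*) = max_{W ∈ 𝒲₁(E)} min_{V ∈ 𝒱(E,D)} φ(V,W)`.
(The two bounds of the paper's Theorem 1 are taken as hypotheses.) -/
theorem matching_condition_II
    {X Y Xh : Type*} [Fintype X] [Fintype Y] [Fintype Xh] [DecidableEq Y]
    [Nonempty X] [Nonempty Y] [Nonempty Xh]
    (P : X → ℝ) (hP : IsDist P)
    (e : X → Y → ℝ) (he0 : ∀ x y, 0 ≤ e x y) (heZ : ∀ x, ∃ y, e x y = 0)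
    (d : X → Xh → ℝ) (hd0 : ∀ x xh, 0 ≤ d x xh) (hdZ : ∀ x, ∃ xh, d x xh = 0)
    (D E : ℝ) (hD : 0 ≤ D) (hE : 0 ≤ E)
    -- the converse bound of Theorem 1
    (hlow : sSup ((fun W => RWZ P d D W) '' W1 P e E) ≤ Rm P e d D E)
    -- the direct bound of Theorem 1
    (hup : Rm P e d D E ≤
      sSup ((fun W => sInf ((fun V => phi P V W) '' Vrob P e d E D)) '' W1 P e E))
    -- the saddle point (V*, W*)
    (Vstar : X → (Y → Xh) → ℝ) (Wstar : X → Y → ℝ)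
    (hVstar : Vstar ∈ Vrob P e d E D) (hWstar : Wstar ∈ W1 P e E)
    (hsaddle1 : ∀ V ∈ Vrob P e d E D, phi P Vstar Wstar ≤ phi P V Wstar)
    (hsaddle2 : ∀ W ∈ W1 P e E, phi P Vstar W ≤ phi P Vstar Wstar)
    (hsaddleVal : phi P Vstar Wstar =
      sSup ((fun W => sInf ((fun V => phi P V W) '' Vrob P e d E D)) '' W1 P e E))
    -- V̂, the minimizer of φ(·,W*) over 𝒱(W*,D)
    (Vhat : X → (Y → Xh) → ℝ) (hVhat : Vhat ∈ Vset P d Wstar D)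
    (hVhatMin : ∀ V ∈ Vset P d Wstar D, phi P Vhat Wstar ≤ phi P V Wstar)
    -- the support of V̂ consists only of constant functions: supp(V̂) ⊆ 𝒰̄
    (hsupp : ∀ x, ∀ u : Y → Xh, Vhat x u ≠ 0 → ∃ c : Xh, ∀ y, u y = c) :
    Rm P e d D E = phi P Vstar Wstar ∧
    phi P Vstar Wstar =
      sSup ((fun W => sInf ((fun V => phi P V W) '' Vrob P e d E D)) '' W1 P e E) :=
  matching_condition_II_general P e d D E hlow hup Vstar Wstar hVstar hWstar hsaddle1 hsaddle2
    hsaddleVal Vhat hVhat hVhatMin hsupp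

end UWZ
end
end

section
/- Converse bound for the average distortion class via the Heegard–Berger rate-distortion function: R_a(D|E) ≥ max min R_HB(D₁,D₂|W₁,W₂), where the max is over all λ ∈ [0,1], E₁,E₂ ≥ 0 and single-letter channels W₁,W₂ with λE₁+(1−λ)E₂ ≤ E and W_j ∈ 𝒲₁(E_j) (j=1,2), and the min is over all D₁,D₂ ∈ [0,d_max] with λD₁+(1−λ)D₂ ≤ D. -/
open scoped BigOperators

noncomputable section

namespace UWZ

/-!
Fix `λ`, `W₁`, `W₂` as in the statement. The channel sequence that applies `W₁ⁿ` with probability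
`λ` and `W₂ⁿ` otherwise has average side-information distortion `λ E₁ + (1 - λ) E₂ ≤ E`, so a code
for `𝒲_a(E)` of rate `R` has distortion at most `D + ε` on it. Choosing for every source sequence
the best message of the stochastic encoder turns it into a Heegard–Berger code whose two branch
distortions `a, b` satisfy `λ a + (1 - λ) b ≤ D + ε`. As `ε → 0` these pairs have a limit point
`(D₁, D₂) ∈ [0, d_max]²` with `λ D₁ + (1 - λ) D₂ ≤ D`, and repeating one good block code over all
longer blocklengths shows that `(D₁, D₂)` is achievable at rate `R`, i.e.
`R_HB(D₁, D₂ | W₁, W₂) ≤ R`.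
-/

section ProductSums

open Finset

variable {ι A : Type*} [Fintype ι] [DecidableEq ι] [Fintype A]

theorem sum_pi_prod_eq_one {w : A → ℝ} (hw : ∑ a, w a = 1) :
    ∑ f : ι → A, ∏ i, w (f i) = 1 := by
  rw [← Fintype.prod_sum (fun _ => w), hw, prod_const_one]

theorem sum_pi_prod_mul_apply {w : A → ℝ} (hw : ∑ a, w a = 1) (h : A → ℝ) (i : ι) :
    ∑ f : ι → A, (∏ j, w (f j)) * h (f i) = ∑ a, w a * h a := by
  calc ∑ f : ι → A, (∏ j, w (f j)) * h (f i)
      = ∑ f : ι → A, ∏ j, w (f j) * (if j = i then h (f j) else 1) := by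
        refine sum_congr rfl fun f _ => ?_
        rw [prod_mul_distrib, prod_ite_eq' univ i fun j => h (f j), if_pos (mem_univ i)]
    _ = ∏ j, ∑ a, w a * (if j = i then h a else 1) :=
        (Fintype.prod_sum fun j a => w a * if j = i then h a else 1).symm
    _ = ∑ a, w a * h a := by
        rw [Fintype.prod_eq_single i fun j hj => by simp [hj, hw]]
        simp

theorem sum_pi_prod_mul_sum {w : A → ℝ} (hw : ∑ a, w a = 1) (h : A → ℝ) :
    ∑ f : ι → A, (∏ j, w (f j)) * ∑ i, h (f i) = Fintype.card ι * ∑ a, w a * h a := by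
  simp_rw [mul_sum]
  rw [sum_comm]
  simp [sum_pi_prod_mul_apply hw h, mul_sum]

theorem sum_sum_mul_mul_add {α β : Type*} [Fintype α] [Fintype β] {a : α → ℝ} {b : β → ℝ}
    (ha : ∑ x, a x = 1) (hb : ∑ y, b y = 1) (u : α → ℝ) (v : β → ℝ) :
    ∑ x, ∑ y, a x * b y * (u x + v y) = ∑ x, a x * u x + ∑ y, b y * v y := by
  have hu : ∀ x, ∑ y, a x * b y * u x = a x * u x := fun x => by
    rw [← sum_mul, ← mul_sum, hb, mul_one]
  have hv : ∀ y, ∑ x, a x * b y * v y = b y * v y := fun y => by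
    rw [← sum_mul, ← sum_mul, ha, one_mul]
  simp only [mul_add, sum_add_distrib, hu]
  rw [sum_comm]
  simp only [hv]

end ProductSums

theorem logb_natCast_div_nonneg {M : ℕ} (hM : 0 < M) (n : ℕ) : 0 ≤ Real.logb 2 M / n :=
  div_nonneg (Real.logb_nonneg one_lt_two (by exact_mod_cast hM)) n.cast_nonneg

section Distortion

open Finset

variable {X Xh : Type*}

theorem dseq_nonneg {d : X → Xh → ℝ} (hd0 : ∀ x xh, 0 ≤ d x xh) (n : ℕ)
    (xs : Fin n → X) (ys : Fin n → Xh) : 0 ≤ dseq d n xs ys :=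
  div_nonneg (sum_nonneg fun _ _ => hd0 _ _) n.cast_nonneg

theorem dseq_le {d : X → Xh → ℝ} {dmax : ℝ} (hdm : 0 ≤ dmax) (hdmax : ∀ x xh, d x xh ≤ dmax)
    (n : ℕ) (xs : Fin n → X) (ys : Fin n → Xh) : dseq d n xs ys ≤ dmax := by
  rcases n.eq_zero_or_pos with rfl | hn
  · simpa [dseq] using hdm
  · rw [dseq, div_le_iff₀ (by exact_mod_cast hn), mul_comm]
    simpa using sum_le_sum fun t (_ : t ∈ univ) => hdmax (xs t) (ys t)

end Distortion

section Sequences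

open Finset

variable {X Y Xh : Type*} [Fintype X] [Fintype Y]

def jointLaw (P : X → ℝ) (W : X → Y → ℝ) (p : X × Y) : ℝ := P p.1 * W p.1 p.2

theorem sum_jointLaw {P : X → ℝ} (hP : IsDist P) {W : X → Y → ℝ} (hW : IsChannel W) :
    ∑ p, jointLaw P W p = 1 := by
  simp [jointLaw, Fintype.sum_prod_type, ← mul_sum, (hW _).2, hP.2]

theorem isChannel_memoryless {W : X → Y → ℝ} (hW : IsChannel W) (n : ℕ) :
    IsChannel (memoryless W n) := fun xs =>
  ⟨fun _ => prod_nonneg fun _ _ => (hW _).1 _, by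
    simp [memoryless, ← Fintype.prod_sum fun t => W (xs t), (hW _).2]⟩

def seqExpect (P : X → ℝ) {n : ℕ} (Wn : (Fin n → X) → (Fin n → Y) → ℝ)
    (f : (Fin n → X) → (Fin n → Y) → ℝ) : ℝ :=
  ∑ xs, ∑ ys, iid P n xs * Wn xs ys * f xs ys

theorem seqExpect_memoryless (P : X → ℝ) (W : X → Y → ℝ) {n : ℕ}
    (f : (Fin n → X) → (Fin n → Y) → ℝ) :
    seqExpect P (memoryless W n) f =
      ∑ Z : Fin n → X × Y, (∏ t, jointLaw P W (Z t)) * f (fun t => (Z t).1) fun t => (Z t).2 := by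
  rw [seqExpect, ← Fintype.sum_prod_type',
    ← (Equiv.arrowProdEquivProdArrow (Fin n) (fun _ => X) fun _ => Y).sum_comp]
  simp [iid, memoryless, jointLaw, prod_mul_distrib, Equiv.arrowProdEquivProdArrow]

theorem seqExpect_add_channel (P : X → ℝ) {n : ℕ} (a b : ℝ)
    (V U : (Fin n → X) → (Fin n → Y) → ℝ) (f : (Fin n → X) → (Fin n → Y) → ℝ) :
    seqExpect P (fun xs ys => a * V xs ys + b * U xs ys) f =
      a * seqExpect P V f + b * seqExpect P U f := by
  simp only [seqExpect, mul_sum, ← sum_add_distrib]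
  exact sum_congr rfl fun _ _ => sum_congr rfl fun _ _ => by ring

theorem seqExpect_mem_Icc {P : X → ℝ} (hP : IsDist P) {n : ℕ}
    {Wn : (Fin n → X) → (Fin n → Y) → ℝ} (hW : IsChannel Wn)
    {f : (Fin n → X) → (Fin n → Y) → ℝ} {c : ℝ} (hf : ∀ xs ys, f xs ys ∈ Set.Icc 0 c) :
    seqExpect P Wn f ∈ Set.Icc 0 c := by
  have hw : ∀ xs ys, 0 ≤ iid P n xs * Wn xs ys := fun xs ys =>
    mul_nonneg (prod_nonneg fun _ _ => hP.1 _) ((hW xs).1 ys)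
  have hmass : ∑ xs, ∑ ys, iid P n xs * Wn xs ys = 1 := by
    simp [← mul_sum, (hW _).2, iid, ← Fintype.prod_sum fun _ => P, hP.2]
  refine ⟨sum_nonneg fun xs _ => sum_nonneg fun ys _ =>
    mul_nonneg (hw xs ys) (hf xs ys).1, ?_⟩
  calc seqExpect P Wn f ≤ ∑ xs, ∑ ys, iid P n xs * Wn xs ys * c :=
        sum_le_sum fun xs _ => sum_le_sum fun ys _ =>
          mul_le_mul_of_nonneg_left (hf xs ys).2 (hw xs ys)
    _ = c := by simp [← sum_mul, hmass]

theorem hbExpDist_mem_Icc {P : X → ℝ} (hP : IsDist P) {W : X → Y → ℝ} (hW : IsChannel W)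
    {d : X → Xh → ℝ} (hd0 : ∀ x xh, 0 ≤ d x xh) {dmax : ℝ} (hdm : 0 ≤ dmax)
    (hdmax : ∀ x xh, d x xh ≤ dmax) {n M : ℕ} (enc : (Fin n → X) → Fin M)
    (dec : Fin M → (Fin n → Y) → Fin n → Xh) :
    hbExpDist P d W enc dec ∈ Set.Icc 0 dmax :=
  seqExpect_mem_Icc hP (isChannel_memoryless hW n) fun xs _ =>
    ⟨dseq_nonneg hd0 n xs _, dseq_le hdm hdmax n xs _⟩

theorem avgSideDist_memoryless {P : X → ℝ} (hP : IsDist P) {W : X → Y → ℝ} (hW : IsChannel W)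
    (e : X → Y → ℝ) {n : ℕ} (hn : 0 < n) :
    avgSideDist P e (memoryless W n) = eDist P e W := by
  change seqExpect P (memoryless W n) (dseq e n) = _
  rw [seqExpect_memoryless]
  simp only [dseq, mul_div_assoc', ← sum_div]
  rw [sum_pi_prod_mul_sum (sum_jointLaw hP hW) fun p => e p.1 p.2]
  simp [eDist, jointLaw, Fintype.sum_prod_type, hn.ne']

end Sequences

section Repetition

open Finset Filter

def blockEquiv (n m : ℕ) : Fin m ≃ (Fin (m / n) × Fin n) ⊕ Fin (m % n) :=
  (finCongr (Nat.div_add_mod' m n)).symm.trans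
    (finSumFinEquiv.symm.trans (Equiv.sumCongr finProdFinEquiv.symm (Equiv.refl _)))

def splitEquiv (n m : ℕ) (A : Type*) :
    (Fin m → A) ≃ (Fin (m / n) → Fin n → A) × (Fin (m % n) → A) :=
  ((blockEquiv n m).arrowCongr (Equiv.refl A)).trans
    ((Equiv.sumArrowEquivProdArrow _ _ A).trans ((Equiv.curry _ _ A).prodCongr (Equiv.refl _)))

variable {n m : ℕ}

@[simp]
theorem splitEquiv_apply_fst {A : Type*} (Z : Fin m → A) (i : Fin (m / n)) :
    (splitEquiv n m A Z).1 i = fun j => Z ((blockEquiv n m).symm (.inl (i, j))) := rfl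

@[simp]
theorem splitEquiv_symm_apply_inl {A : Type*} (FG : (Fin (m / n) → Fin n → A) × (Fin (m % n) → A))
    (i : Fin (m / n)) (j : Fin n) :
    (splitEquiv n m A).symm FG ((blockEquiv n m).symm (.inl (i, j))) = FG.1 i j :=
  congrArg (fun FG => FG.1 i j) ((splitEquiv n m A).apply_symm_apply FG)

@[simp]
theorem splitEquiv_symm_apply_inr {A : Type*} (FG : (Fin (m / n) → Fin n → A) × (Fin (m % n) → A))
    (k : Fin (m % n)) :
    (splitEquiv n m A).symm FG ((blockEquiv n m).symm (.inr k)) = FG.2 k :=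
  congrArg (fun FG => FG.2 k) ((splitEquiv n m A).apply_symm_apply FG)

@[to_additive]
theorem prod_eq_prod_blocks {M : Type*} [CommMonoid M] (u : Fin m → M) :
    ∏ t, u t = (∏ i, ∏ j, u ((blockEquiv n m).symm (.inl (i, j)))) *
      ∏ k, u ((blockEquiv n m).symm (.inr k)) := by
  rw [← (blockEquiv n m).symm.prod_comp, Fintype.prod_sum_type, Fintype.prod_prod_type]

variable {X Y Xh : Type*} [Nonempty Xh]

def repEnc {M : ℕ} (enc : (Fin n → X) → Fin M) (m : ℕ) :
    (Fin m → X) → Fin (M ^ (m / n)) :=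
  fun xs => finFunctionFinEquiv fun i => enc ((splitEquiv n m X xs).1 i)

def repDec {M : ℕ} (dec : Fin M → (Fin n → Y) → Fin n → Xh) (m : ℕ) :
    Fin (M ^ (m / n)) → (Fin m → Y) → Fin m → Xh :=
  fun c ys => (splitEquiv n m Xh).symm
    (fun i => dec (finFunctionFinEquiv.symm c i) ((splitEquiv n m Y ys).1 i),
      fun _ => Classical.arbitrary Xh)

def HBCode.rep (C : HBCode X Y Xh n) (m : ℕ) : HBCode X Y Xh m where
  M := C.M ^ (m / n)
  Mpos := pow_pos C.Mpos _
  enc := repEnc C.enc m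
  dec1 := repDec C.dec1 m
  dec2 := repDec C.dec2 m

theorem logb_rep_div_le (C : HBCode X Y Xh n) (m : ℕ) :
    Real.logb 2 ((C.rep m).M : ℝ) / m ≤ Real.logb 2 C.M / n := by
  have hlog : 0 ≤ Real.logb 2 C.M := Real.logb_nonneg one_lt_two (by exact_mod_cast C.Mpos)
  rcases m.eq_zero_or_pos with rfl | hm
  · simpa using logb_natCast_div_nonneg C.Mpos n
  rcases n.eq_zero_or_pos with rfl | hn
  · simp [HBCode.rep]
  have hqn : ((m / n : ℕ) : ℝ) * n ≤ m := by exact_mod_cast Nat.div_mul_le_self m n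
  rw [HBCode.rep, Nat.cast_pow, Real.logb_pow, div_le_div_iff₀ (by positivity) (by positivity)]
  calc ((m / n : ℕ) : ℝ) * Real.logb 2 C.M * n = Real.logb 2 C.M * (((m / n : ℕ) : ℝ) * n) := by
        ring
    _ ≤ Real.logb 2 C.M * m := mul_le_mul_of_nonneg_left hqn hlog

variable [Fintype X] [Fintype Y]

theorem hbExpDist_rep {P : X → ℝ} (hP : IsDist P) {W : X → Y → ℝ} (hW : IsChannel W)
    (d : X → Xh → ℝ) (hn : 0 < n) {M : ℕ} (enc : (Fin n → X) → Fin M)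
    (dec : Fin M → (Fin n → Y) → Fin n → Xh) (m : ℕ) :
    hbExpDist P d W (repEnc enc m) (repDec dec m) =
      ((m / n : ℕ) * (n * hbExpDist P d W enc dec) +
        (m % n : ℕ) * ∑ p, jointLaw P W p * d p.1 (Classical.arbitrary Xh)) / m := by
  set g := jointLaw P W
  have hg := sum_jointLaw hP hW
  set blockDist : (Fin n → X × Y) → ℝ := fun z =>
    ∑ j, d (z j).1 (dec (enc fun j => (z j).1) (fun j => (z j).2) j)
  have hblock : n * hbExpDist P d W enc dec = ∑ z, (∏ j, g (z j)) * blockDist z := by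
    change _ * seqExpect _ _ _ = _
    rw [seqExpect_memoryless, mul_sum]
    refine sum_congr rfl fun z _ => ?_
    rw [dseq]
    field_simp
    rfl
  have hF := sum_pi_prod_mul_sum (ι := Fin (m / n)) (sum_pi_prod_eq_one hg) blockDist
  have hG := sum_pi_prod_mul_sum (ι := Fin (m % n)) hg fun p => d p.1 (Classical.arbitrary Xh)
  rw [Fintype.card_fin] at hF hG
  rw [hblock, ← hF, ← hG, ← sum_sum_mul_mul_add (sum_pi_prod_eq_one (sum_pi_prod_eq_one hg))
    (sum_pi_prod_eq_one hg)]
  change seqExpect _ _ _ = _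
  rw [seqExpect_memoryless, ← (splitEquiv n m _).symm.sum_comp, Fintype.sum_prod_type, sum_div]
  simp_rw [sum_div]
  refine sum_congr rfl fun F _ => sum_congr rfl fun G _ => ?_
  rw [prod_eq_prod_blocks (n := n), dseq, sum_eq_sum_blocks (n := n)]
  simp [repDec, repEnc, blockDist, mul_div_assoc]

theorem hbExpDist_rep_le {P : X → ℝ} (hP : IsDist P) {W : X → Y → ℝ} (hW : IsChannel W)
    {d : X → Xh → ℝ} (hd0 : ∀ x xh, 0 ≤ d x xh) {dmax : ℝ} (hdmax : ∀ x xh, d x xh ≤ dmax)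
    (hn : 0 < n) (hm : 0 < m) {M : ℕ} (enc : (Fin n → X) → Fin M)
    (dec : Fin M → (Fin n → Y) → Fin n → Xh) :
    hbExpDist P d W (repEnc enc m) (repDec dec m) ≤ hbExpDist P d W enc dec + dmax * n / m := by
  set c := ∑ p, jointLaw P W p * d p.1 (Classical.arbitrary Xh)
  have hg : ∀ p, 0 ≤ jointLaw P W p := fun p => mul_nonneg (hP.1 _) ((hW _).1 _)
  have hc0 : 0 ≤ c := sum_nonneg fun p _ => mul_nonneg (hg p) (hd0 _ _)
  have hc : c ≤ dmax := by
    calc c ≤ ∑ p, jointLaw P W p * dmax :=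
          sum_le_sum fun p _ => mul_le_mul_of_nonneg_left (hdmax _ _) (hg p)
      _ = dmax := by rw [← sum_mul, sum_jointLaw hP hW, one_mul]
  have hbase := (hbExpDist_mem_Icc hP hW hd0 (hc0.trans hc) hdmax enc dec).1
  have hqn : ((m / n : ℕ) : ℝ) * n ≤ m := by exact_mod_cast Nat.div_mul_le_self m n
  have hsn : ((m % n : ℕ) : ℝ) ≤ n := by exact_mod_cast (Nat.mod_lt m hn).le
  rw [hbExpDist_rep hP hW d hn, div_le_iff₀ (by exact_mod_cast hm), add_mul,
    div_mul_cancel₀ _ (by positivity)]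
  nlinarith [mul_le_mul_of_nonneg_right hqn hbase, mul_le_mul_of_nonneg_right hsn hc0,
    mul_le_mul_of_nonneg_left hc (n.cast_nonneg : (0 : ℝ) ≤ n)]

theorem hbAchievable_of_forall_hbCode {P : X → ℝ} (hP : IsDist P)
    {W₁ W₂ : X → Y → ℝ} (hW₁ : IsChannel W₁) (hW₂ : IsChannel W₂) {d : X → Xh → ℝ}
    (hd0 : ∀ x xh, 0 ≤ d x xh) {dmax : ℝ} (hdmax : ∀ x xh, d x xh ≤ dmax) {D₁ D₂ R : ℝ}
    (h : ∀ ε > (0 : ℝ), ∃ n > 0, ∃ C : HBCode X Y Xh n,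
      Real.logb 2 C.M / n ≤ R + ε ∧ hbExpDist P d W₁ C.enc C.dec1 ≤ D₁ + ε ∧
        hbExpDist P d W₂ C.enc C.dec2 ≤ D₂ + ε) :
    HBAchievable P d W₁ W₂ D₁ D₂ R := by
  intro ε hε
  obtain ⟨n, hn, C, hrate, h₁, h₂⟩ := h (ε / 2) (half_pos hε)
  obtain ⟨n₀, hn₀⟩ := (((tendsto_const_div_atTop_nhds_zero_nat (dmax * n)).eventually
    (ge_mem_nhds (half_pos hε))).and (eventually_gt_atTop 0)).exists_forall_of_atTop
  refine ⟨n₀, C.rep, fun m hm => ⟨?_, ?_, ?_⟩⟩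
  · linarith [logb_rep_div_le C m]
  · exact (hbExpDist_rep_le hP hW₁ hd0 hdmax hn (hn₀ m hm).2 C.enc C.dec1).trans
      (by linarith [(hn₀ m hm).1])
  · exact (hbExpDist_rep_le hP hW₂ hd0 hdmax hn (hn₀ m hm).2 C.enc C.dec2).trans
      (by linarith [(hn₀ m hm).1])

end Repetition

section Rates

variable {X Y Xh : Type*} [Fintype X] [Fintype Y]

theorem Achievable.nonneg {P : X → ℝ} {d : X → Xh → ℝ} {WC : Set (ChannelSeq X Y)} {D R : ℝ}
    (h : Achievable P d WC D R) : 0 ≤ R :=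
  le_of_forall_pos_le_add fun ε hε => by
    obtain ⟨n₀, C, hC⟩ := h ε hε
    simpa using (logb_natCast_div_nonneg (C n₀).Mpos n₀).trans (hC n₀ le_rfl).1

theorem HBAchievable.nonneg {P : X → ℝ} {d : X → Xh → ℝ} {W₁ W₂ : X → Y → ℝ} {D₁ D₂ R : ℝ}
    (h : HBAchievable P d W₁ W₂ D₁ D₂ R) : 0 ≤ R :=
  le_of_forall_pos_le_add fun ε hε => by
    obtain ⟨n₀, C, hC⟩ := h ε hε
    simpa using (logb_natCast_div_nonneg (C n₀).Mpos n₀).trans (hC n₀ le_rfl).1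

theorem RHB_nonneg (P : X → ℝ) (d : X → Xh → ℝ) (W₁ W₂ : X → Y → ℝ) (D₁ D₂ : ℝ) :
    0 ≤ RHB P d W₁ W₂ D₁ D₂ :=
  Real.sInf_nonneg fun _ hR => HBAchievable.nonneg hR

theorem RHB_le {P : X → ℝ} {d : X → Xh → ℝ} {W₁ W₂ : X → Y → ℝ} {D₁ D₂ R : ℝ}
    (h : HBAchievable P d W₁ W₂ D₁ D₂ R) : RHB P d W₁ W₂ D₁ D₂ ≤ R :=
  csInf_le ⟨0, fun _ hR => HBAchievable.nonneg hR⟩ h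

def losslessCode [Nonempty X] (xh : X → Xh) (n : ℕ) : Code X Y Xh n where
  M := Fintype.card (Fin n → X)
  Mpos := Fintype.card_pos
  enc xs k := if k = Fintype.equivFin _ xs then 1 else 0
  enc_channel xs := ⟨fun k => by positivity, by simp⟩
  dec k _ t := xh ((Fintype.equivFin _).symm k t)

theorem expDist_losslessCode [Nonempty X] {P : X → ℝ} {d : X → Xh → ℝ} {xh : X → Xh}
    (hxh : ∀ x, d x (xh x) = 0) {n : ℕ} (Wn : (Fin n → X) → (Fin n → Y) → ℝ) :
    (losslessCode xh n).expDist P d Wn = 0 := by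
  refine Finset.sum_eq_zero fun xs _ => Finset.sum_eq_zero fun ys _ =>
    Finset.sum_eq_zero fun k _ => ?_
  simp only [losslessCode]
  split_ifs with hk
  · simp [hk, dseq, hxh]
  · simp

theorem achievable_logb_card [Nonempty X] (P : X → ℝ) {d : X → Xh → ℝ}
    (hdZ : ∀ x, ∃ xh, d x xh = 0) {D : ℝ} (hD : 0 ≤ D) (WC : Set (ChannelSeq X Y)) :
    Achievable P d WC D (Real.logb 2 (Fintype.card X)) := by
  choose xh hxh using hdZ
  refine fun ε hε => ⟨1, losslessCode xh, fun n hn => ⟨?_, fun Wseq _ => ?_⟩⟩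
  · have hn' : (n : ℝ) ≠ 0 := by positivity
    simp only [losslessCode, Fintype.card_fun, Fintype.card_fin, Nat.cast_pow, Real.logb_pow]
    rw [mul_div_cancel_left₀ _ hn']
    linarith
  · rw [expDist_losslessCode hxh]
    linarith

end Rates

section Mixture

open Finset

variable {X Y Xh : Type*} [Fintype X] [Fintype Y]

theorem exists_enc_seqExpect_le_expDist {P : X → ℝ} (hP : ∀ x, 0 ≤ P x) {n : ℕ}
    (C : Code X Y Xh n) (d : X → Xh → ℝ) (Wn : (Fin n → X) → (Fin n → Y) → ℝ) :
    ∃ f : (Fin n → X) → Fin C.M,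
      seqExpect P Wn (fun xs ys => dseq d n xs (C.dec (f xs) ys)) ≤ C.expDist P d Wn := by
  set score : (Fin n → X) → Fin C.M → ℝ := fun xs k => ∑ ys, Wn xs ys * dseq d n xs (C.dec k ys)
  choose f hf using fun xs => exists_min_image univ (score xs) ⟨⟨0, C.Mpos⟩, mem_univ _⟩
  refine ⟨f, ?_⟩
  have hdet : seqExpect P Wn (fun xs ys => dseq d n xs (C.dec (f xs) ys)) =
      ∑ xs, iid P n xs * score xs (f xs) := by
    simp only [seqExpect, score, mul_sum, mul_assoc]
  have hrand : C.expDist P d Wn = ∑ xs, iid P n xs * ∑ k, C.enc xs k * score xs k := by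
    simp only [Code.expDist, score, mul_sum]
    refine sum_congr rfl fun xs _ => ?_
    rw [sum_comm]
    exact sum_congr rfl fun _ _ => sum_congr rfl fun _ _ => by ring
  rw [hdet, hrand]
  refine sum_le_sum fun xs _ => mul_le_mul_of_nonneg_left ?_ (prod_nonneg fun _ _ => hP _)
  calc score xs (f xs) = ∑ k, C.enc xs k * score xs (f xs) := by
        rw [← sum_mul, (C.enc_channel xs).2, one_mul]
    _ ≤ ∑ k, C.enc xs k * score xs k := sum_le_sum fun k _ =>
        mul_le_mul_of_nonneg_left ((hf xs).2 k (mem_univ k)) ((C.enc_channel xs).1 k)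

def mixMemoryless (lam : ℝ) (W₁ W₂ : X → Y → ℝ) : ChannelSeq X Y :=
  fun n xs ys => lam * memoryless W₁ n xs ys + (1 - lam) * memoryless W₂ n xs ys

theorem mixMemoryless_mem_avgClass {P : X → ℝ} (hP : IsDist P) {e : X → Y → ℝ}
    {lam E E₁ E₂ : ℝ} (hl0 : 0 ≤ lam) (hl1 : lam ≤ 1) {W₁ W₂ : X → Y → ℝ}
    (hW₁ : W₁ ∈ W1 P e E₁) (hW₂ : W₂ ∈ W1 P e E₂) (hE : lam * E₁ + (1 - lam) * E₂ ≤ E) :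
    mixMemoryless lam W₁ W₂ ∈ AvgClass P e E := by
  have hl1' : 0 ≤ 1 - lam := sub_nonneg.2 hl1
  refine ⟨fun n xs => ⟨fun ys => ?_, ?_⟩, fun n hn => ?_⟩
  · exact add_nonneg (mul_nonneg hl0 ((isChannel_memoryless hW₁.1 n xs).1 ys))
      (mul_nonneg hl1' ((isChannel_memoryless hW₂.1 n xs).1 ys))
  · simp only [mixMemoryless, sum_add_distrib, ← mul_sum, (isChannel_memoryless hW₁.1 n xs).2,
      (isChannel_memoryless hW₂.1 n xs).2]
    ring
  · change seqExpect P (fun xs ys => lam * memoryless W₁ n xs ys +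
      (1 - lam) * memoryless W₂ n xs ys) (dseq e n) ≤ E
    rw [seqExpect_add_channel]
    change lam * avgSideDist P e (memoryless W₁ n) +
      (1 - lam) * avgSideDist P e (memoryless W₂ n) ≤ E
    rw [avgSideDist_memoryless hP hW₁.1 e hn, avgSideDist_memoryless hP hW₂.1 e hn]
    nlinarith [mul_le_mul_of_nonneg_left hW₁.2 hl0, mul_le_mul_of_nonneg_left hW₂.2 hl1']

theorem exists_hbCode_of_achievable {P : X → ℝ} (hP : ∀ x, 0 ≤ P x) {d : X → Xh → ℝ}
    {WC : Set (ChannelSeq X Y)} {D R lam : ℝ} {W₁ W₂ : X → Y → ℝ}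
    (hR : Achievable P d WC D R) (hmix : mixMemoryless lam W₁ W₂ ∈ WC) {ε : ℝ} (hε : 0 < ε) :
    ∃ n > 0, ∃ C : HBCode X Y Xh n, Real.logb 2 C.M / n ≤ R + ε ∧
      lam * hbExpDist P d W₁ C.enc C.dec1 + (1 - lam) * hbExpDist P d W₂ C.enc C.dec2 ≤
        D + ε := by
  obtain ⟨n₀, C, hC⟩ := hR ε hε
  obtain ⟨hrate, hdist⟩ := hC (n₀ + 1) n₀.le_succ
  obtain ⟨f, hf⟩ := exists_enc_seqExpect_le_expDist hP (C (n₀ + 1)) d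
    (mixMemoryless lam W₁ W₂ (n₀ + 1))
  refine ⟨n₀ + 1, n₀.succ_pos, ⟨(C _).M, (C _).Mpos, f, (C _).dec, (C _).dec⟩, hrate, ?_⟩
  have hsplit := seqExpect_add_channel P lam (1 - lam) (memoryless W₁ (n₀ + 1))
    (memoryless W₂ (n₀ + 1)) fun xs ys => dseq d (n₀ + 1) xs ((C _).dec (f xs) ys)
  exact hsplit ▸ hf.trans (hdist _ hmix)

end Mixture

section Converse

open Filter Topology

variable {X Y Xh : Type*} [Fintype X] [Fintype Y] [Nonempty Xh]

theorem exists_hbAchievable_of_achievable_avgClass {P : X → ℝ} (hP : IsDist P)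
    {e : X → Y → ℝ} {d : X → Xh → ℝ} (hd0 : ∀ x xh, 0 ≤ d x xh) {dmax : ℝ} (hdm : 0 ≤ dmax)
    (hdmax : ∀ x xh, d x xh ≤ dmax) {D E lam E₁ E₂ : ℝ} (hl0 : 0 ≤ lam) (hl1 : lam ≤ 1)
    {W₁ W₂ : X → Y → ℝ} (hW₁ : W₁ ∈ W1 P e E₁) (hW₂ : W₂ ∈ W1 P e E₂)
    (hE : lam * E₁ + (1 - lam) * E₂ ≤ E) {R : ℝ} (hR : Achievable P d (AvgClass P e E) D R) :
    ∃ D₁ ∈ Set.Icc 0 dmax, ∃ D₂ ∈ Set.Icc 0 dmax,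
      lam * D₁ + (1 - lam) * D₂ ≤ D ∧ HBAchievable P d W₁ W₂ D₁ D₂ R := by
  have hmix := mixMemoryless_mem_avgClass hP hl0 hl1 hW₁ hW₂ hE
  choose n hn C hrate hdist using fun k : ℕ =>
    exists_hbCode_of_achievable (Xh := Xh) hP.1 hR hmix (Nat.one_div_pos_of_nat (n := k))
  set a : ℕ → ℝ × ℝ := fun k =>
    (hbExpDist P d W₁ (C k).enc (C k).dec1, hbExpDist P d W₂ (C k).enc (C k).dec2)
  have ha : ∀ k, a k ∈ Set.Icc 0 dmax ×ˢ Set.Icc 0 dmax := fun k =>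
    ⟨hbExpDist_mem_Icc hP hW₁.1 hd0 hdm hdmax _ _, hbExpDist_mem_Icc hP hW₂.1 hd0 hdm hdmax _ _⟩
  -- the distortion pairs need not converge, so pass to a convergent subsequence
  obtain ⟨⟨D₁, D₂⟩, ⟨hD₁, hD₂⟩, φ, hφ, hlim⟩ := (isCompact_Icc.prod isCompact_Icc).tendsto_subseq ha
  have hslack : Tendsto (fun k => 1 / ((φ k : ℝ) + 1)) atTop (𝓝 0) :=
    tendsto_one_div_add_atTop_nhds_zero_nat.comp hφ.tendsto_atTop
  refine ⟨D₁, hD₁, D₂, hD₂, ?_, hbAchievable_of_forall_hbCode hP hW₁.1 hW₂.1 hd0 hdmax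
    fun ε hε => ?_⟩
  · have hcomb : Continuous fun p : ℝ × ℝ => lam * p.1 + (1 - lam) * p.2 := by fun_prop
    exact le_of_tendsto_of_tendsto ((hcomb.tendsto _).comp hlim)
      (by simpa using tendsto_const_nhds.add hslack) (Eventually.of_forall fun k => hdist (φ k))
  · have h₁ := ((continuous_fst.tendsto _).comp hlim).eventually
      (gt_mem_nhds (lt_add_of_pos_right D₁ hε))
    have h₂ := ((continuous_snd.tendsto _).comp hlim).eventually
      (gt_mem_nhds (lt_add_of_pos_right D₂ hε))
    obtain ⟨k, hk₁, hk₂, hk₃⟩ := (h₁.and (h₂.and (hslack.eventually (gt_mem_nhds hε)))).exists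
    exact ⟨n (φ k), hn _, C (φ k), (hrate _).trans (by linarith), hk₁.le, hk₂.le⟩

end Converse

theorem Ra_converse_HB_general
    {X Y Xh : Type*} [Fintype X] [Fintype Y]
    [Nonempty X] [Nonempty Xh]
    (P : X → ℝ) (hP : IsDist P)
    (e : X → Y → ℝ)
    (d : X → Xh → ℝ) (dmax : ℝ) (hd0 : ∀ x xh, 0 ≤ d x xh)
    (hdmax : ∀ x xh, d x xh ≤ dmax) (hdZ : ∀ x, ∃ xh, d x xh = 0)
    (D E : ℝ) (hD : 0 ≤ D) :
    sSup {r : ℝ | ∃ lam E₁ E₂ : ℝ, ∃ Wa Wb : X → Y → ℝ,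
        0 ≤ lam ∧ lam ≤ 1 ∧ 0 ≤ E₁ ∧ 0 ≤ E₂ ∧
        lam * E₁ + (1 - lam) * E₂ ≤ E ∧
        Wa ∈ W1 P e E₁ ∧ Wb ∈ W1 P e E₂ ∧
        r = sInf {s : ℝ | ∃ D₁ D₂ : ℝ,
          0 ≤ D₁ ∧ D₁ ≤ dmax ∧ 0 ≤ D₂ ∧ D₂ ≤ dmax ∧
          lam * D₁ + (1 - lam) * D₂ ≤ D ∧
          s = RHB P d Wa Wb D₁ D₂}}
      ≤ Ra P e d D E := by
  have hdm : 0 ≤ dmax := (hd0 _ _).trans (hdmax (Classical.arbitrary X) (Classical.arbitrary Xh))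
  refine Real.sSup_le ?_ (Real.sInf_nonneg fun _ hR => Achievable.nonneg hR)
  rintro _ ⟨lam, E₁, E₂, W₁, W₂, hl0, hl1, -, -, hE, hW₁, hW₂, rfl⟩
  refine le_csInf ⟨_, achievable_logb_card P hdZ hD _⟩ fun R hR => ?_
  obtain ⟨D₁, hD₁, D₂, hD₂, hmix, hHB⟩ :=
    exists_hbAchievable_of_achievable_avgClass hP hd0 hdm hdmax hl0 hl1 hW₁ hW₂ hE hR
  have hbdd : BddBelow {s : ℝ | ∃ D₁ D₂ : ℝ, 0 ≤ D₁ ∧ D₁ ≤ dmax ∧ 0 ≤ D₂ ∧ D₂ ≤ dmax ∧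
      lam * D₁ + (1 - lam) * D₂ ≤ D ∧ s = RHB P d W₁ W₂ D₁ D₂} :=
    ⟨0, by rintro _ ⟨D₁, D₂, -, -, -, -, -, rfl⟩; exact RHB_nonneg P d W₁ W₂ D₁ D₂⟩
  exact (csInf_le hbdd ⟨D₁, D₂, hD₁.1, hD₁.2, hD₂.1, hD₂.2, hmix, rfl⟩).trans (RHB_le hHB)

/-- Converse bound for the average distortion class via the Heegard–Berger
rate-distortion function: `R_a(D|E) ≥ max min R_HB(D₁,D₂|W₁,W₂)`, where the max is over all
`λ ∈ [0,1]`, `E₁,E₂ ≥ 0` and single-letter channels `W₁,W₂` with `λE₁+(1−λ)E₂ ≤ E` and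
`W_j ∈ 𝒲₁(E_j)`, and the min is over all `D₁,D₂ ∈ [0,d_max]` with `λD₁+(1−λ)D₂ ≤ D`. -/
theorem Ra_converse_HB
    {X Y Xh : Type*} [Fintype X] [Fintype Y] [Fintype Xh]
    [Nonempty X] [Nonempty Y] [Nonempty Xh]
    (P : X → ℝ) (hP : IsDist P)
    (e : X → Y → ℝ) (he0 : ∀ x y, 0 ≤ e x y) (heZ : ∀ x, ∃ y, e x y = 0)
    (d : X → Xh → ℝ) (dmax : ℝ) (hd0 : ∀ x xh, 0 ≤ d x xh)
    (hdmax : ∀ x xh, d x xh ≤ dmax) (hdZ : ∀ x, ∃ xh, d x xh = 0)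
    (D E : ℝ) (hD : 0 ≤ D) (hE : 0 ≤ E) :
    sSup {r : ℝ | ∃ lam E₁ E₂ : ℝ, ∃ Wa Wb : X → Y → ℝ,
        0 ≤ lam ∧ lam ≤ 1 ∧ 0 ≤ E₁ ∧ 0 ≤ E₂ ∧
        lam * E₁ + (1 - lam) * E₂ ≤ E ∧
        Wa ∈ W1 P e E₁ ∧ Wb ∈ W1 P e E₂ ∧
        r = sInf {s : ℝ | ∃ D₁ D₂ : ℝ,
          0 ≤ D₁ ∧ D₁ ≤ dmax ∧ 0 ≤ D₂ ∧ D₂ ≤ dmax ∧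
          lam * D₁ + (1 - lam) * D₂ ≤ D ∧
          s = RHB P d Wa Wb D₁ D₂}}
      ≤ Ra P e d D E :=
  Ra_converse_HB_general P hP e d dmax hd0 hdmax hdZ D E hD

end UWZ
end
end

section
/- Binary Hamming characterization: let 𝒳 = 𝒴 = 𝒳̂ = {0,1}, P_X uniform, with both e and d the Hamming distortion, and 0 < E ≤ 1/2. Then the matching condition holds and R_m(D|E) = max_{W ∈ 𝒲₁(E)} min_{V ∈ 𝒱(E,D)} φ(V,W); moreover the maximizing channel is the binary symmetric channel BSC(E). -/
open scoped BigOperators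

noncomputable section

namespace UWZ

/-- the uniform distribution on `{0,1}`. -/
def unifBool : Bool → ℝ := fun _ => 1 / 2

/-- the Hamming distortion on `{0,1}`. -/
def hamBool : Bool → Bool → ℝ := fun a b => if a = b then 0 else 1

/-- the binary symmetric channel with crossover probability `p`. -/
def BSC (p : ℝ) : Bool → Bool → ℝ := fun x y => if x = y then 1 - p else p

/-!
By the two bounds of Theorem 1 it suffices to show that for every `W ∈ 𝒲₁(E)` the robust
minimum `min_{V ∈ 𝒱(E,D)} φ(V,W)` is at most `R_WZ(D|BSC E)`, which is itself at most the robust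
minimum at `BSC E` because `𝒱(E,D) ⊆ 𝒱(BSC E, D)`.

Take `V` meeting distortion `D` on `BSC E`. Averaging `V` with its relabelling by bit flips
(which fixes `BSC E` and the Hamming distortion) and then folding the decoder `not` into `id`
gives a flip-invariant `V'` meeting distortion `D` on all of `𝒲₁(E)`. Since
`φ = H(X|Y) - H(X|U,Y)` is convex in `V` and cannot increase when `U` is replaced by a function
of `U`, `φ(V', BSC E) ≤ φ(V, BSC E)`. Finally `φ(V', W) = H(U|Y) - H(U|X)`, and Gibbs' inequality
against the posterior of `U` under `BSC E` shows that `BSC E` maximises `φ(V', ·)` on `𝒲₁(E)`.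
-/

open Finset

section Entropy

variable {A : Type*} [Fintype A]

theorem sum_mul_logb_le_sum_mul_logb_self {p q : A → ℝ} (hp : ∀ a, 0 ≤ p a)
    (hp1 : ∑ a, p a = 1) (hq : ∀ a, 0 ≤ q a) (hq1 : ∑ a, q a ≤ 1)
    (hpq : ∀ a, p a ≠ 0 → q a ≠ 0) :
    ∑ a, p a * Real.logb 2 (q a) ≤ ∑ a, p a * Real.logb 2 (p a) := by
  have hlog2 : 0 < Real.log 2 := Real.log_pos one_lt_two
  have hterm : ∀ a,
      p a * Real.logb 2 (q a) - p a * Real.logb 2 (p a) ≤ (q a - p a) / Real.log 2 := by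
    intro a
    rcases (hp a).eq_or_lt with h0 | h0
    · rw [← h0, zero_mul, zero_mul, sub_zero, sub_zero]
      exact div_nonneg (hq a) hlog2.le
    have hqa : 0 < q a := (hq a).lt_of_ne (hpq a h0.ne').symm
    have hlog : Real.log (q a / p a) ≤ q a / p a - 1 := Real.log_le_sub_one_of_pos (by positivity)
    rw [← mul_sub, ← Real.logb_div hqa.ne' h0.ne', Real.logb, mul_div_assoc',
      div_le_div_iff_of_pos_right hlog2]
    calc p a * Real.log (q a / p a) ≤ p a * (q a / p a - 1) := by gcongr
      _ = q a - p a := by field_simp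
  have hsum := sum_le_sum fun a (_ : a ∈ univ) => hterm a
  rw [sum_sub_distrib, ← sum_div, sum_sub_distrib, hp1] at hsum
  have : (∑ a, q a - 1) / Real.log 2 ≤ 0 := div_nonpos_of_nonpos_of_nonneg (by linarith) hlog2.le
  linarith

theorem neg_mul_logb_nonneg {p : ℝ} (h0 : 0 ≤ p) (h1 : p ≤ 1) : 0 ≤ -(p * Real.logb 2 p) :=
  neg_nonneg.2 (mul_nonpos_of_nonneg_of_nonpos h0 (Real.logb_nonpos one_lt_two h0 h1))

theorem neg_mul_logb_le_two {p : ℝ} (h0 : 0 ≤ p) : -(p * Real.logb 2 p) ≤ 2 := by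
  have hlog2 : 1 / 2 < Real.log 2 := by linarith [Real.log_two_gt_d9]
  have hneg : Real.negMulLog p ≤ 1 := (Real.negMulLog_le_one_sub_self h0).trans (by linarith)
  rw [Real.logb, ← mul_div_assoc, ← neg_div, ← neg_mul, div_le_iff₀ (by linarith)]
  rw [Real.negMulLog] at hneg
  linarith

theorem le_one_of_sum_eq_one {J : A → ℝ} (h0 : ∀ a, 0 ≤ J a) (h1 : ∑ a, J a = 1) (a : A) :
    J a ≤ 1 :=
  h1 ▸ single_le_sum (fun b _ => h0 b) (mem_univ a)

theorem ent_nonneg {J : A → ℝ} (h0 : ∀ a, 0 ≤ J a) (h1 : ∑ a, J a = 1) : 0 ≤ ent J := by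
  rw [ent, ← sum_neg_distrib]
  exact sum_nonneg fun a _ => neg_mul_logb_nonneg (h0 a) (le_one_of_sum_eq_one h0 h1 a)

theorem ent_le_two_mul_card {J : A → ℝ} (h0 : ∀ a, 0 ≤ J a) : ent J ≤ 2 * Fintype.card A := by
  rw [ent, ← sum_neg_distrib, mul_comm, ← nsmul_eq_mul, ← card_univ,
    ← sum_const]
  exact sum_le_sum fun a _ => neg_mul_logb_le_two (h0 a)

theorem ent_comp_equiv {A' : Type*} [Fintype A'] (e : A' ≃ A) (J : A → ℝ) :
    ent (J ∘ e) = ent J := by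
  rw [ent, ent, Function.comp_def, Equiv.sum_comp e (fun a => J a * Real.logb 2 (J a))]

end Entropy

section MutualInformation

variable {A B : Type*} [Fintype A] [Fintype B]

theorem abs_mutInf_le {J : A × B → ℝ} (h0 : ∀ p, 0 ≤ J p) (h1 : ∑ p, J p = 1) :
    |mutInf J| ≤ 2 * (Fintype.card A + Fintype.card B + Fintype.card (A × B)) := by
  have hA0 : ∀ a, 0 ≤ ∑ b, J (a, b) := fun a => sum_nonneg fun b _ => h0 (a, b)
  have hB0 : ∀ b, 0 ≤ ∑ a, J (a, b) := fun b => sum_nonneg fun a _ => h0 (a, b)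
  have hA1 : ∑ a, ∑ b, J (a, b) = 1 := by rw [← Fintype.sum_prod_type', h1]
  have hB1 : ∑ b, ∑ a, J (a, b) = 1 := by rw [sum_comm, hA1]
  have := ent_nonneg hA0 hA1
  have := ent_nonneg hB0 hB1
  have := ent_nonneg h0 h1
  have := ent_le_two_mul_card hA0
  have := ent_le_two_mul_card hB0
  have := ent_le_two_mul_card h0
  rw [mutInf, abs_le]
  constructor <;> linarith

theorem mutInf_comp_prodCongr {A' B' : Type*} [Fintype A'] [Fintype B'] (eA : A' ≃ A)
    (eB : B' ≃ B) (J : A × B → ℝ) :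
    mutInf (fun p : A' × B' => J (eA p.1, eB p.2)) = mutInf J := by
  have hA : (fun a' => ∑ b', J (eA a', eB b')) = (fun a => ∑ b, J (a, b)) ∘ eA :=
    funext fun a' => Equiv.sum_comp eB fun b => J (eA a', b)
  have hB : (fun b' => ∑ a', J (eA a', eB b')) = (fun b => ∑ a, J (a, b)) ∘ eB :=
    funext fun b' => Equiv.sum_comp eA fun a => J (a, eB b')
  rw [mutInf, mutInf, hA, hB, ent_comp_equiv, ent_comp_equiv,
    show (fun p : A' × B' => J (eA p.1, eB p.2)) = J ∘ eA.prodCongr eB from rfl, ent_comp_equiv]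

end MutualInformation

section ConditionalEntropy

variable {K B : Type*} [Fintype B]

def condEnt [Fintype K] (T : K × B → ℝ) : ℝ := ent T - ent fun k => ∑ b, T (k, b)

def condProb (T : K × B → ℝ) (p : K × B) : ℝ := T p / ∑ b, T (p.1, b)

variable {T : K × B → ℝ}

theorem le_sum_snd (hT0 : ∀ p, 0 ≤ T p) (p : K × B) : T p ≤ ∑ b, T (p.1, b) :=
  single_le_sum (fun b _ => hT0 (p.1, b)) (mem_univ p.2)

theorem condProb_nonneg (hT0 : ∀ p, 0 ≤ T p) (p : K × B) : 0 ≤ condProb T p :=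
  div_nonneg (hT0 p) (sum_nonneg fun b _ => hT0 (p.1, b))

theorem condProb_pos (hT0 : ∀ p, 0 ≤ T p) {p : K × B} (hp : 0 < T p) : 0 < condProb T p :=
  div_pos hp (hp.trans_le (le_sum_snd hT0 p))

theorem sum_condProb_le_one (T : K × B → ℝ) (k : K) : ∑ b, condProb T (k, b) ≤ 1 := by
  simp only [condProb]
  rw [← sum_div]
  exact div_self_le_one _

variable [Fintype K]

theorem sum_mul_comp_fst (T : K × B → ℝ) (g : K → ℝ) :
    ∑ p, T p * g p.1 = ∑ k, (∑ b, T (k, b)) * g k := by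
  rw [Fintype.sum_prod_type]
  simp_rw [sum_mul]

theorem condEnt_le_neg_sum_mul_logb {R : K × B → ℝ} (hT0 : ∀ p, 0 ≤ T p)
    (hT1 : ∑ p, T p = 1) (hR0 : ∀ p, 0 ≤ R p) (hR1 : ∀ k, ∑ b, R (k, b) ≤ 1)
    (hTR : ∀ p, T p ≠ 0 → R p ≠ 0) :
    condEnt T ≤ -∑ p, T p * Real.logb 2 (R p) := by
  set M : K → ℝ := fun k => ∑ b, T (k, b) with hM
  have hM0 : ∀ k, 0 ≤ M k := fun k => sum_nonneg fun b _ => hT0 (k, b)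
  have hTM : ∀ p, T p ≠ 0 → M p.1 ≠ 0 := fun p hp =>
    (((hT0 p).lt_of_ne hp.symm).trans_le (le_sum_snd hT0 p)).ne'
  have hq1 : ∑ p, M p.1 * R p ≤ 1 := calc
    ∑ p, M p.1 * R p = ∑ k, M k * ∑ b, R (k, b) := by
      rw [Fintype.sum_prod_type]
      simp_rw [mul_sum]
    _ ≤ ∑ k, M k := sum_le_sum fun k _ => mul_le_of_le_one_right (hM0 k) (hR1 k)
    _ = 1 := by rw [hM, ← Fintype.sum_prod_type', hT1]
  have hgibbs := sum_mul_logb_le_sum_mul_logb_self hT0 hT1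
    (fun p => mul_nonneg (hM0 p.1) (hR0 p)) hq1 fun p hp => mul_ne_zero (hTM p hp) (hTR p hp)
  have hsplit : ∑ p, T p * Real.logb 2 (M p.1 * R p)
      = -ent M + ∑ p, T p * Real.logb 2 (R p) := calc
    _ = ∑ p, (T p * Real.logb 2 (M p.1) + T p * Real.logb 2 (R p)) := by
      refine sum_congr rfl fun p _ => ?_
      by_cases hp : T p = 0
      · simp [hp]
      · rw [Real.logb_mul (hTM p hp) (hTR p hp), mul_add]
    _ = -ent M + ∑ p, T p * Real.logb 2 (R p) := by
      rw [sum_add_distrib, sum_mul_comp_fst T fun k => Real.logb 2 (M k), ent, neg_neg]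
  rw [condEnt, ent]
  linarith

theorem condEnt_eq_neg_sum_mul_logb_condProb (hT0 : ∀ p, 0 ≤ T p) :
    condEnt T = -∑ p, T p * Real.logb 2 (condProb T p) := by
  have hsplit : ∀ p, T p * Real.logb 2 (condProb T p)
      = T p * Real.logb 2 (T p) - T p * Real.logb 2 (∑ b, T (p.1, b)) := by
    intro p
    rcases (hT0 p).eq_or_lt with hp | hp
    · simp [← hp]
    · rw [condProb, Real.logb_div hp.ne' (hp.trans_le (le_sum_snd hT0 p)).ne', mul_sub]
  rw [sum_congr rfl fun p _ => hsplit p, sum_sub_distrib,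
    sum_mul_comp_fst T fun k => Real.logb 2 (∑ b, T (k, b)), condEnt, ent, ent]
  ring

theorem condEnt_add_condEnt_le {T₁ T₂ : K × B → ℝ} (h₁0 : ∀ p, 0 ≤ T₁ p)
    (h₁1 : ∑ p, T₁ p = 1) (h₂0 : ∀ p, 0 ≤ T₂ p) (h₂1 : ∑ p, T₂ p = 1) :
    condEnt T₁ + condEnt T₂ ≤ 2 * condEnt fun p => (T₁ p + T₂ p) / 2 := by
  set T : K × B → ℝ := fun p => (T₁ p + T₂ p) / 2 with hT
  have hT0 : ∀ p, 0 ≤ T p := fun p => by have := h₁0 p; have := h₂0 p; positivity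
  have cross : ∀ T' : K × B → ℝ, (∀ p, 0 ≤ T' p) → ∑ p, T' p = 1 → (∀ p, T' p ≤ 2 * T p) →
      condEnt T' ≤ -∑ p, T' p * Real.logb 2 (condProb T p) := fun T' h0 h1 hle =>
    condEnt_le_neg_sum_mul_logb h0 h1 (condProb_nonneg hT0) (sum_condProb_le_one T)
      fun p hp => (condProb_pos hT0 (by linarith [hle p, (h0 p).lt_of_ne hp.symm])).ne'
  have hc₁ := cross T₁ h₁0 h₁1 fun p => by simp only [hT]; linarith [h₂0 p]
  have hc₂ := cross T₂ h₂0 h₂1 fun p => by simp only [hT]; linarith [h₁0 p]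
  have hmid : 2 * condEnt T = -(∑ p, T₁ p * Real.logb 2 (condProb T p)
      + ∑ p, T₂ p * Real.logb 2 (condProb T p)) := by
    rw [condEnt_eq_neg_sum_mul_logb_condProb hT0, mul_neg, mul_sum, ← sum_add_distrib]
    exact congrArg _ (sum_congr rfl fun p _ => by simp only [hT]; ring)
  linarith

/-- `hmap` says that `T'` is the image of `T` under `f × id`. -/
theorem condEnt_le_condEnt_of_map {K' : Type*} [Fintype K'] {T' : K' × B → ℝ} (f : K → K')
    (hT0 : ∀ p, 0 ≤ T p) (hT1 : ∑ p, T p = 1)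
    (hmap : ∀ g : K' × B → ℝ, ∑ p, T' p * g p = ∑ p, T p * g (f p.1, p.2)) :
    condEnt T ≤ condEnt T' := by
  classical
  have hT' : ∀ q, T' q = ∑ p, T p * if (f p.1, p.2) = q then 1 else 0 := fun q => by
    simpa using hmap fun q' => if q' = q then 1 else 0
  have hT'0 : ∀ q, 0 ≤ T' q := fun q => by
    rw [hT' q]
    exact sum_nonneg fun p _ => mul_nonneg (hT0 p) (by split_ifs <;> norm_num)
  have hle : ∀ p, T p ≤ T' (f p.1, p.2) := fun p => by
    rw [hT']
    simpa using single_le_sum (f := fun p' => T p' * if (f p'.1, p'.2) = (f p.1, p.2)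
      then (1 : ℝ) else 0) (fun p' _ => mul_nonneg (hT0 p') (by split_ifs <;> norm_num))
      (mem_univ p)
  rw [condEnt_eq_neg_sum_mul_logb_condProb hT'0, hmap fun q => Real.logb 2 (condProb T' q)]
  exact condEnt_le_neg_sum_mul_logb hT0 hT1 (fun p => condProb_nonneg hT'0 _)
    (fun k => sum_condProb_le_one T' (f k))
    fun p hp => (condProb_pos hT'0 (((hT0 p).lt_of_ne hp.symm).trans_le (hle p))).ne'

end ConditionalEntropy

section Pushforward

variable {K K' : Type*} [Fintype K] [DecidableEq K']

def mapSum (f : K → K') (g : K → ℝ) (k' : K') : ℝ := ∑ k with f k = k', g k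

theorem sum_mapSum_mul [Fintype K'] (f : K → K') (g : K → ℝ) (h : K' → ℝ) :
    ∑ k', mapSum f g k' * h k' = ∑ k, g k * h (f k) := by
  simp_rw [mapSum, sum_mul]
  rw [← sum_fiberwise univ f fun k => g k * h (f k)]
  exact sum_congr rfl fun k' _ => sum_congr rfl fun k hk => by rw [(mem_filter.1 hk).2]

theorem IsChannel.mapSum {A : Type*} [Fintype A] [Fintype K'] {V : A → K → ℝ}
    (hV : IsChannel V) (f : K → K') : IsChannel fun a => mapSum f (V a) := fun a =>
  ⟨fun k' => sum_nonneg fun k _ => (hV a).1 k, by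
    simpa [(hV a).2] using sum_mapSum_mul f (V a) fun _ => 1⟩

end Pushforward

theorem IsChannel.midpoint {A K : Type*} [Fintype A] [Fintype K] {V₁ V₂ : A → K → ℝ}
    (h₁ : IsChannel V₁) (h₂ : IsChannel V₂) : IsChannel fun a k => (V₁ a k + V₂ a k) / 2 :=
  fun a => ⟨fun k => by have := (h₁ a).1 k; have := (h₂ a).1 k; positivity, by
    rw [← sum_div, sum_add_distrib, (h₁ a).2, (h₂ a).2]; norm_num⟩

section Joint

variable {X Y Xh : Type*} [Fintype X] [Fintype Y] [Fintype Xh] [DecidableEq Y]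
  {P : X → ℝ} {V : X → (Y → Xh) → ℝ} {W : X → Y → ℝ}

/-- Ordered so that `condEnt (jointUYX P V W)` is `H(X | U, Y)`. -/
def jointUYX (P : X → ℝ) (V : X → (Y → Xh) → ℝ) (W : X → Y → ℝ) :
    ((Y → Xh) × Y) × X → ℝ :=
  fun t => P t.2 * V t.2 t.1.1 * W t.2 t.1.2

def jointUY (P : X → ℝ) (V : X → (Y → Xh) → ℝ) (W : X → Y → ℝ) : (Y → Xh) × Y → ℝ :=
  fun p => ∑ x, P x * V x p.1 * W x p.2

theorem sum_jointUYX_mul (g : ((Y → Xh) × Y) × X → ℝ) :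
    ∑ t, jointUYX P V W t * g t = ∑ y, ∑ x, ∑ u, V x u * (P x * W x y * g ((u, y), x)) := by
  simp only [jointUYX, Fintype.sum_prod_type]
  rw [sum_comm]
  refine sum_congr rfl fun y _ => ?_
  rw [sum_comm]
  exact sum_congr rfl fun x _ => sum_congr rfl fun u _ => by ring

theorem sum_jointUYX_mul_ux (hW : IsChannel W) (g : (Y → Xh) × X → ℝ) :
    ∑ t, jointUYX P V W t * g (t.1.1, t.2) = ∑ p : (Y → Xh) × X, P p.2 * V p.2 p.1 * g p := by
  simp only [jointUYX, Fintype.sum_prod_type]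
  refine sum_congr rfl fun u _ => ?_
  rw [sum_comm]
  refine sum_congr rfl fun x _ => ?_
  rw [← sum_mul, ← mul_sum, (hW x).2, mul_one]

theorem sum_jointUYX_mul_yx (hV : IsChannel V) (g : Y × X → ℝ) :
    ∑ t, jointUYX P V W t * g (t.1.2, t.2) = ∑ p : Y × X, P p.2 * W p.2 p.1 * g p := by
  rw [sum_jointUYX_mul, Fintype.sum_prod_type]
  refine sum_congr rfl fun y _ => sum_congr rfl fun x _ => ?_
  dsimp only
  rw [← sum_mul, (hV x).2, one_mul]

theorem sum_jointUYX_mul_x (hV : IsChannel V) (hW : IsChannel W) (g : X → ℝ) :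
    ∑ t, jointUYX P V W t * g t.2 = ∑ x, P x * g x := by
  rw [sum_jointUYX_mul_yx hV fun p => g p.2, Fintype.sum_prod_type, sum_comm]
  refine sum_congr rfl fun x _ => ?_
  dsimp only
  rw [← sum_mul, ← mul_sum, (hW x).2, mul_one]

theorem jointUYX_nonneg (hP : IsDist P) (hV : IsChannel V) (hW : IsChannel W)
    (t : ((Y → Xh) × Y) × X) : 0 ≤ jointUYX P V W t :=
  mul_nonneg (mul_nonneg (hP.1 _) ((hV _).1 _)) ((hW _).1 _)

theorem sum_jointUYX (hP : IsDist P) (hV : IsChannel V) (hW : IsChannel W) :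
    ∑ t, jointUYX P V W t = 1 := by
  simpa [hP.2] using sum_jointUYX_mul_x (P := P) hV hW fun _ => 1

theorem jointUY_nonneg (hP : IsDist P) (hV : IsChannel V) (hW : IsChannel W)
    (p : (Y → Xh) × Y) : 0 ≤ jointUY P V W p :=
  sum_nonneg fun x _ => jointUYX_nonneg hP hV hW ((p.1, p.2), x)

theorem sum_jointUY (hP : IsDist P) (hV : IsChannel V) (hW : IsChannel W) :
    ∑ p, jointUY P V W p = 1 :=
  (Fintype.sum_prod_type (jointUYX P V W)).symm.trans (sum_jointUYX hP hV hW)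

theorem sum_jointUY_fst (hV : IsChannel V) (y : Y) :
    ∑ u, jointUY P V W (u, y) = ∑ x, P x * W x y := by
  simp only [jointUY]
  rw [sum_comm]
  refine sum_congr rfl fun x _ => ?_
  rw [← sum_mul, ← mul_sum, (hV x).2, mul_one]

theorem jointUY_pos_of_ne_zero {W' : X → Y → ℝ} (hP : IsDist P) (hV : IsChannel V)
    (hW' : ∀ x y, 0 < W' x y) {p : (Y → Xh) × Y} (h : jointUY P V W p ≠ 0) :
    0 < jointUY P V W' p := by
  obtain ⟨x, -, hx⟩ := exists_ne_zero_of_sum_ne_zero h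
  have hPV : 0 < P x * V x p.1 := (mul_nonneg (hP.1 x) ((hV x).1 _)).lt_of_ne
    fun h0 => hx (by rw [← h0, zero_mul])
  exact sum_pos' (fun x _ => mul_nonneg (mul_nonneg (hP.1 x) ((hV x).1 _)) (hW' x _).le)
    ⟨x, mem_univ x, mul_pos hPV (hW' x p.2)⟩

def jointYU (P : X → ℝ) (V : X → (Y → Xh) → ℝ) (W : X → Y → ℝ) : Y × (Y → Xh) → ℝ :=
  fun p => jointUY P V W (p.2, p.1)

theorem sum_jointYU (hP : IsDist P) (hV : IsChannel V) (hW : IsChannel W) :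
    ∑ p, jointYU P V W p = 1 :=
  (Equiv.sum_comp (Equiv.prodComm _ _) (jointUY P V W)).trans (sum_jointUY hP hV hW)

/-- `U - X - Y` is a Markov chain. -/
theorem ent_jointUYX (hV : IsChannel V) (hW : IsChannel W) :
    ent (jointUYX P V W) = ent (fun p : (Y → Xh) × X => P p.2 * V p.2 p.1)
      + ent (fun p : Y × X => P p.2 * W p.2 p.1) - ent P := by
  have hsplit : ∀ t, jointUYX P V W t * Real.logb 2 (jointUYX P V W t)
      = jointUYX P V W t * Real.logb 2 (P t.2 * V t.2 t.1.1)
        + jointUYX P V W t * Real.logb 2 (P t.2 * W t.2 t.1.2)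
        - jointUYX P V W t * Real.logb 2 (P t.2) := by
    rintro ⟨⟨u, y⟩, x⟩
    by_cases h : jointUYX P V W ((u, y), x) = 0
    · simp [h]
    have hP : P x ≠ 0 := fun h' => h (by simp [jointUYX, h'])
    have hV : V x u ≠ 0 := fun h' => h (by simp [jointUYX, h'])
    have hW : W x y ≠ 0 := fun h' => h (by simp [jointUYX, h'])
    simp only [jointUYX]
    rw [Real.logb_mul (mul_ne_zero hP hV) hW, Real.logb_mul hP hW]
    ring
  rw [ent, sum_congr rfl fun t _ => hsplit t, sum_sub_distrib, sum_add_distrib,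
    sum_jointUYX_mul_ux hW fun p => Real.logb 2 (P p.2 * V p.2 p.1),
    sum_jointUYX_mul_yx hV fun p => Real.logb 2 (P p.2 * W p.2 p.1),
    sum_jointUYX_mul_x hV hW fun x => Real.logb 2 (P x), ent, ent, ent]
  ring

theorem phi_eq_ent (hW : IsChannel W) :
    phi P V W = ent (fun x => ∑ u, P x * V x u) - ent (fun p : (Y → Xh) × X => P p.2 * V p.2 p.1)
      + ent (jointUY P V W) - ent (fun y => ∑ u, jointUY P V W (u, y)) := by
  have hU : (fun u => ∑ y, jointUY P V W (u, y)) = fun u => ∑ x, P x * V x u := by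
    funext u
    simp only [jointUY]
    rw [sum_comm]
    simp_rw [← mul_sum, (hW _).2, mul_one]
  rw [phi, mutInf, mutInf]
  change _ - (ent (fun u => ∑ y, jointUY P V W (u, y)) + _ - ent (jointUY P V W)) = _
  rw [hU]
  simp only [jointUY]
  ring

theorem phi_eq_condEnt_UY_sub (hW : IsChannel W) :
    phi P V W = condEnt (jointYU P V W) - condEnt (fun p : X × (Y → Xh) => P p.1 * V p.1 p.2) := by
  have hUY : ent (jointYU P V W) = ent (jointUY P V W) :=
    ent_comp_equiv (Equiv.prodComm _ _) (jointUY P V W)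
  have hUX : ent (fun p : X × (Y → Xh) => P p.1 * V p.1 p.2)
      = ent (fun p : (Y → Xh) × X => P p.2 * V p.2 p.1) :=
    ent_comp_equiv (Equiv.prodComm _ _) (fun p : (Y → Xh) × X => P p.2 * V p.2 p.1)
  rw [phi_eq_ent hW, condEnt, condEnt, hUY, hUX]
  simp only [jointYU]
  ring

theorem phi_eq_condEnt_YX_sub (hV : IsChannel V) (hW : IsChannel W) :
    phi P V W = condEnt (fun p : Y × X => P p.2 * W p.2 p.1) - condEnt (jointUYX P V W) := by
  have hY : (fun y => ∑ u, jointUY P V W (u, y)) = fun y => ∑ x, P x * W x y :=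
    funext (sum_jointUY_fst hV)
  have hX : (fun x => ∑ u, P x * V x u) = P :=
    funext fun x => by rw [← mul_sum, (hV x).2, mul_one]
  rw [phi_eq_ent hW, hY, hX, condEnt, condEnt, ent_jointUYX hV hW]
  change _ = _ - (_ - ent (jointUY P V W))
  ring

end Joint

section PhiProperties

variable {X Y Xh : Type*} [Fintype X] [Fintype Y] [Fintype Xh] [DecidableEq Y]
  {P : X → ℝ} {V V₁ V₂ : X → (Y → Xh) → ℝ} {W : X → Y → ℝ}

theorem phi_midpoint_le (hP : IsDist P) (h₁ : IsChannel V₁) (h₂ : IsChannel V₂)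
    (hW : IsChannel W) :
    phi P (fun x u => (V₁ x u + V₂ x u) / 2) W ≤ (phi P V₁ W + phi P V₂ W) / 2 := by
  have hmid : jointUYX P (fun x u => (V₁ x u + V₂ x u) / 2) W
      = fun t => (jointUYX P V₁ W t + jointUYX P V₂ W t) / 2 := by
    funext t
    simp only [jointUYX]
    ring
  have := condEnt_add_condEnt_le (jointUYX_nonneg hP h₁ hW) (sum_jointUYX hP h₁ hW)
    (jointUYX_nonneg hP h₂ hW) (sum_jointUYX hP h₂ hW)
  rw [phi_eq_condEnt_YX_sub (h₁.midpoint h₂) hW, phi_eq_condEnt_YX_sub h₁ hW,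
    phi_eq_condEnt_YX_sub h₂ hW, hmid]
  linarith

theorem phi_mapSum_le {Xh' : Type*} [Fintype Xh'] [DecidableEq Xh'] (hP : IsDist P)
    (hV : IsChannel V) (hW : IsChannel W) (f : (Y → Xh) → (Y → Xh')) :
    phi P (fun x => mapSum f (V x)) W ≤ phi P V W := by
  have := condEnt_le_condEnt_of_map (fun k : (Y → Xh) × Y => (f k.1, k.2))
    (jointUYX_nonneg hP hV hW) (sum_jointUYX hP hV hW)
    (T' := jointUYX P (fun x => mapSum f (V x)) W) fun g => by
      rw [sum_jointUYX_mul, sum_jointUYX_mul]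
      exact sum_congr rfl fun y _ => sum_congr rfl fun x _ =>
        sum_mapSum_mul f (V x) fun u => P x * W x y * g ((u, y), x)
  rw [phi_eq_condEnt_YX_sub (hV.mapSum f) hW, phi_eq_condEnt_YX_sub hV hW]
  linarith

theorem abs_phi_le (hP : IsDist P) (hV : IsChannel V) (hW : IsChannel W) :
    |phi P V W| ≤ 2 * (Fintype.card (Y → Xh) + Fintype.card X + Fintype.card ((Y → Xh) × X))
      + 2 * (Fintype.card (Y → Xh) + Fintype.card Y + Fintype.card ((Y → Xh) × Y)) := by
  have hUX : ∑ p : (Y → Xh) × X, P p.2 * V p.2 p.1 = 1 := by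
    simpa [sum_jointUYX hP hV hW] using (sum_jointUYX_mul_ux (P := P) (V := V) hW fun _ => 1).symm
  have h₁ := abs_mutInf_le (fun p => mul_nonneg (hP.1 p.2) ((hV p.2).1 p.1)) hUX
  have h₂ := abs_mutInf_le (jointUY_nonneg hP hV hW) (sum_jointUY hP hV hW)
  exact (abs_sub _ _).trans (add_le_add h₁ h₂)

theorem bddBelow_phi_image (hP : IsDist P) (hW : IsChannel W) {S : Set (X → (Y → Xh) → ℝ)}
    (hS : ∀ V ∈ S, IsChannel V) : BddBelow ((fun V => phi P V W) '' S) :=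
  ⟨_, by rintro _ ⟨V, hV, rfl⟩; exact neg_le_of_abs_le (abs_phi_le hP (hS V hV) hW)⟩

theorem bddAbove_RWZ_image (hP : IsDist P) (d : X → Xh → ℝ) (D : ℝ) {S : Set (X → Y → ℝ)}
    (hS : ∀ W ∈ S, IsChannel W) : BddAbove ((fun W => RWZ P d D W) '' S) := by
  refine ⟨2 * (Fintype.card (Y → Xh) + Fintype.card X + Fintype.card ((Y → Xh) × X))
      + 2 * (Fintype.card (Y → Xh) + Fintype.card Y + Fintype.card ((Y → Xh) × Y)), ?_⟩
  rintro _ ⟨W, hW, rfl⟩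
  have hVset : ∀ V ∈ Vset P d W D, IsChannel V := fun V hV => hV.1
  refine (Real.sInf_le_sSup _ (bddBelow_phi_image hP (hS W hW) hVset) ?_).trans
    (Real.sSup_le ?_ (by positivity))
  · exact ⟨_, by rintro _ ⟨V, hV, rfl⟩; exact le_of_abs_le (abs_phi_le hP (hVset V hV) (hS W hW))⟩
  · rintro _ ⟨V, hV, rfl⟩
    exact le_of_abs_le (abs_phi_le hP (hVset V hV) (hS W hW))

theorem dVW_midpoint (d : X → Xh → ℝ) :
    dVW P d (fun x u => (V₁ x u + V₂ x u) / 2) W = (dVW P d V₁ W + dVW P d V₂ W) / 2 := by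
  simp only [dVW, ← sum_add_distrib, sum_div]
  exact sum_congr rfl fun u _ => sum_congr rfl fun x _ => sum_congr rfl fun y _ => by ring

end PhiProperties

/-- `hst` takes care of the junk value `sInf ∅ = 0`. -/
theorem sInf_image_le_sInf_image {α β : Type*} {f : α → ℝ} {g : β → ℝ} {s : Set α} {t : Set β}
    (hf : BddBelow (f '' s)) (h : ∀ b ∈ t, ∃ a ∈ s, f a ≤ g b) (hst : s.Nonempty → t.Nonempty) :
    sInf (f '' s) ≤ sInf (g '' t) := by
  rcases t.eq_empty_or_nonempty with rfl | ht
  · rcases s.eq_empty_or_nonempty with rfl | hs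
    · simp
    · exact absurd (hst hs) Set.not_nonempty_empty
  · exact le_csInf (ht.image g) (Set.forall_mem_image.2 fun b hb =>
      let ⟨a, ha, hab⟩ := h b hb
      (csInf_le hf (Set.mem_image_of_mem f ha)).trans hab)

section Binary

theorem sum_bool_fun (g : (Bool → Bool) → ℝ) :
    ∑ u, g u = g (Function.const Bool false) + g (Function.const Bool true) + g id + g not := by
  rw [show (univ : Finset (Bool → Bool))
      = {Function.const Bool false, Function.const Bool true, id, not} by decide,
    sum_insert (by decide), sum_insert (by decide), sum_insert (by decide), sum_singleton]
  ring

def negConj (u : Bool → Bool) : Bool → Bool := fun y => !u !y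

theorem negConj_involutive : Function.Involutive negConj := fun u =>
  funext fun y => by simp [negConj]

@[simp] theorem negConj_const (b : Bool) :
    negConj (Function.const Bool b) = Function.const Bool !b :=
  rfl

@[simp] theorem negConj_id : negConj id = id := by decide

@[simp] theorem negConj_not : negConj not = not := by decide

def flipChannel (V : Bool → (Bool → Bool) → ℝ) : Bool → (Bool → Bool) → ℝ :=
  fun x u => V (!x) (negConj u)

variable {V : Bool → (Bool → Bool) → ℝ} {W : Bool → Bool → ℝ} {E : ℝ}

theorem IsChannel.flipChannel (hV : IsChannel V) : IsChannel (flipChannel V) := fun x =>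
  ⟨fun _ => (hV !x).1 _, (Equiv.sum_comp negConj_involutive.toPerm (V !x)).trans (hV !x).2⟩

theorem flipChannel_flipChannel (V : Bool → (Bool → Bool) → ℝ) : flipChannel (flipChannel V) = V :=
  funext fun x => funext fun u => by simp only [flipChannel, Bool.not_not, negConj_involutive u]

theorem BSC_not_not (E : ℝ) (x y : Bool) : BSC E (!x) (!y) = BSC E x y := by
  cases x <;> cases y <;> rfl

theorem jointUY_flipChannel_BSC (u : Bool → Bool) (y : Bool) :
    jointUY unifBool (flipChannel V) (BSC E) (u, y)
      = jointUY unifBool V (BSC E) (negConj u, !y) := by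
  simp only [jointUY, Fintype.sum_bool, flipChannel, unifBool, Bool.not_true, Bool.not_false,
    ← BSC_not_not E true y, ← BSC_not_not E false y]
  ring

theorem phi_flipChannel_BSC (V : Bool → (Bool → Bool) → ℝ) (E : ℝ) :
    phi unifBool (flipChannel V) (BSC E) = phi unifBool V (BSC E) := by
  have hUX := mutInf_comp_prodCongr negConj_involutive.toPerm Bool.involutive_not.toPerm
    fun p : (Bool → Bool) × Bool => unifBool p.2 * V p.2 p.1
  have hUY := mutInf_comp_prodCongr negConj_involutive.toPerm Bool.involutive_not.toPerm
    (jointUY unifBool V (BSC E))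
  show mutInf _ - mutInf _ = mutInf _ - mutInf (jointUY unifBool V (BSC E))
  rw [← hUX, ← hUY]
  congr 2
  funext p
  exact jointUY_flipChannel_BSC p.1 p.2

theorem dVW_flipChannel_BSC (V : Bool → (Bool → Bool) → ℝ) (E : ℝ) :
    dVW unifBool hamBool (flipChannel V) (BSC E) = dVW unifBool hamBool V (BSC E) := by
  simp only [dVW, sum_bool_fun, Fintype.sum_bool, flipChannel, negConj_const, negConj_id,
    negConj_not]
  simp only [BSC, hamBool, unifBool, Function.const_apply, id_eq, Bool.not_true, Bool.not_false,
    Bool.true_eq_false, Bool.false_eq_true, ↓reduceIte]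
  ring

theorem flipChannel_midpoint_self (V : Bool → (Bool → Bool) → ℝ) :
    flipChannel (fun x u => (V x u + flipChannel V x u) / 2)
      = fun x u => (V x u + flipChannel V x u) / 2 := by
  funext x u
  rw [show flipChannel (fun x u => (V x u + flipChannel V x u) / 2) x u
      = (flipChannel V x u + flipChannel (flipChannel V) x u) / 2 from rfl,
    flipChannel_flipChannel, add_comm]

theorem flipChannel_mapSum {f : (Bool → Bool) → (Bool → Bool)}
    (hf : ∀ u, f (negConj u) = negConj (f u)) (V : Bool → (Bool → Bool) → ℝ) :
    flipChannel (fun x => mapSum f (V x)) = fun x => mapSum f (flipChannel V x) := by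
  funext x u
  simp only [flipChannel, mapSum, sum_filter]
  rw [← Equiv.sum_comp negConj_involutive.toPerm]
  refine sum_congr rfl fun k _ => ?_
  simp [hf, negConj_involutive.injective.eq_iff]

def mergeNot (u : Bool → Bool) : Bool → Bool := if u = not then id else u

theorem mergeNot_negConj (u : Bool → Bool) : mergeNot (negConj u) = negConj (mergeNot u) := by
  revert u
  decide

@[simp] theorem mergeNot_const (b : Bool) :
    mergeNot (Function.const Bool b) = Function.const Bool b := by
  cases b <;> decide

@[simp] theorem mergeNot_id : mergeNot id = id := by decide

@[simp] theorem mergeNot_not : mergeNot not = id := by decide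

theorem mapSum_mergeNot_not (g : (Bool → Bool) → ℝ) : mapSum mergeNot g not = 0 := by
  rw [mapSum, sum_filter, sum_bool_fun]
  simp +decide

theorem mapSum_mergeNot_id (g : (Bool → Bool) → ℝ) : mapSum mergeNot g id = g id + g not := by
  rw [mapSum, sum_filter, sum_bool_fun]
  simp +decide

theorem mapSum_mergeNot_const (g : (Bool → Bool) → ℝ) (b : Bool) :
    mapSum mergeNot g (Function.const Bool b) = g (Function.const Bool b) := by
  rw [mapSum, sum_filter, sum_bool_fun]
  cases b <;> simp +decide

theorem eDist_unifBool_hamBool (W : Bool → Bool → ℝ) :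
    eDist unifBool hamBool W = (W false true + W true false) / 2 := by
  simp only [eDist, Fintype.sum_bool, unifBool, hamBool, Bool.true_eq_false, Bool.false_eq_true,
    ↓reduceIte]
  ring

theorem apply_true_of_flipChannel_eq (hV : flipChannel V = V) (u : Bool → Bool) :
    V true u = V false (negConj u) :=
  (congrFun (congrFun hV true) u).symm

theorem dVW_eq_of_flipChannel_eq (hV : flipChannel V = V) (hW : IsChannel W) :
    dVW unifBool hamBool V W = V false id * eDist unifBool hamBool W
      + V false not * (1 - eDist unifBool hamBool W) + V false (Function.const Bool true) := by
  have h₀ := (hW false).2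
  have h₁ := (hW true).2
  simp only [Fintype.sum_bool] at h₀ h₁
  simp only [dVW, eDist_unifBool_hamBool, sum_bool_fun, Fintype.sum_bool,
    apply_true_of_flipChannel_eq hV, negConj_const, negConj_id, negConj_not]
  simp only [hamBool, unifBool, Function.const_apply, id_eq, Bool.not_true, Bool.not_false,
    Bool.true_eq_false, Bool.false_eq_true, ↓reduceIte]
  linear_combination (V false not / 2 + V false (Function.const Bool true) / 2) * (h₀ + h₁)

theorem isDist_unifBool : IsDist unifBool :=
  ⟨fun _ => by norm_num [unifBool], by norm_num [unifBool]⟩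

theorem eDist_BSC (E : ℝ) : eDist unifBool hamBool (BSC E) = E := by
  simp [eDist_unifBool_hamBool, BSC]

theorem BSC_mem_W1 {E : ℝ} (h0 : 0 ≤ E) (h1 : E ≤ 1) : BSC E ∈ W1 unifBool hamBool E :=
  ⟨fun x => ⟨fun y => by unfold BSC; split_ifs <;> linarith, by cases x <;> simp [BSC]⟩,
    (eDist_BSC E).le⟩

theorem sub_mul_logb_sub_logb_nonpos {a b E : ℝ} (ha : 0 ≤ a) (hb : 0 ≤ b) (hE0 : 0 < E)
    (hE : E ≤ 1 / 2) :
    (b - a) * (Real.logb 2 (b * E + a * (1 - E)) - Real.logb 2 (b * (1 - E) + a * E)) ≤ 0 := by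
  rcases lt_trichotomy a b with h | rfl | h
  · have hpos : 0 < b * E + a * (1 - E) := by nlinarith
    have hle : b * E + a * (1 - E) ≤ b * (1 - E) + a * E := by nlinarith
    exact mul_nonpos_of_nonneg_of_nonpos (by linarith)
      (sub_nonpos.2 (Real.logb_le_logb_of_le one_lt_two hpos hle))
  · simp
  · have hpos : 0 < b * (1 - E) + a * E := by nlinarith
    have hle : b * (1 - E) + a * E ≤ b * E + a * (1 - E) := by nlinarith
    exact mul_nonpos_of_nonpos_of_nonneg (by linarith)
      (sub_nonneg.2 (Real.logb_le_logb_of_le one_lt_two hpos hle))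

theorem sum_jointYU_mul_of_flipChannel_eq (hV : flipChannel V = V) (hW : IsChannel W)
    {F : Bool × (Bool → Bool) → ℝ} (hF : ∀ y u, F (!y, negConj u) = F (y, u)) :
    ∑ p, jointYU unifBool V W p * F p
      = V false id * F (false, id) + V false not * F (false, not)
        + V false (Function.const Bool false) * F (true, Function.const Bool true)
        + V false (Function.const Bool true) * F (false, Function.const Bool true)
        + (V false (Function.const Bool true) - V false (Function.const Bool false))
          * eDist unifBool hamBool W
          * (F (true, Function.const Bool true) - F (false, Function.const Bool true)) := by
  have h₀ := (hW false).2
  have h₁ := (hW true).2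
  simp only [Fintype.sum_bool] at h₀ h₁
  have hF' : ∀ u, F (true, u) = F (false, negConj u) := fun u => by
    simpa [negConj_involutive u] using hF false (negConj u)
  simp only [Fintype.sum_prod_type, Fintype.sum_bool, sum_bool_fun, jointYU, jointUY,
    apply_true_of_flipChannel_eq hV, hF', negConj_const, negConj_id, negConj_not,
    eDist_unifBool_hamBool, unifBool, Bool.not_true, Bool.not_false]
  linear_combination (V false id * F (false, id) + V false not * F (false, not)
    + V false (Function.const Bool false) * F (false, Function.const Bool false)
    + V false (Function.const Bool true) * F (false, Function.const Bool true)) / 2 * (h₀ + h₁)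

theorem condProb_jointYU_BSC (hV : IsChannel V) (p : Bool × (Bool → Bool)) :
    condProb (jointYU unifBool V (BSC E)) p = 2 * jointYU unifBool V (BSC E) p := by
  have hden : ∑ u, jointYU unifBool V (BSC E) (p.1, u) = 1 / 2 := by
    simp only [jointYU]
    rw [sum_jointUY_fst hV]
    cases p.1 <;>
      simp only [Fintype.sum_bool, unifBool, BSC, Bool.true_eq_false, Bool.false_eq_true, ↓reduceIte] <;>
      ring
  rw [condProb, hden]
  ring

theorem sum_jointYU_mul_logb_condProb_le (hE0 : 0 < E) (hE : E ≤ 1 / 2) (hV : IsChannel V)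
    (hVf : flipChannel V = V) (hW : W ∈ W1 unifBool hamBool E) :
    ∑ p, jointYU unifBool V (BSC E) p * Real.logb 2 (condProb (jointYU unifBool V (BSC E)) p)
      ≤ ∑ p, jointYU unifBool V W p * Real.logb 2 (condProb (jointYU unifBool V (BSC E)) p) := by
  have hB : IsChannel (BSC E) := (BSC_mem_W1 hE0.le (by linarith)).1
  have hQf : ∀ y u, Real.logb 2 (condProb (jointYU unifBool V (BSC E)) (!y, negConj u))
      = Real.logb 2 (condProb (jointYU unifBool V (BSC E)) (y, u)) := fun y u => by
    rw [condProb_jointYU_BSC hV, condProb_jointYU_BSC hV]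
    simp only [jointYU]
    rw [← jointUY_flipChannel_BSC, hVf]
  have hQ₁ : condProb (jointYU unifBool V (BSC E)) (true, Function.const Bool true)
      = V false (Function.const Bool true) * E + V false (Function.const Bool false) * (1 - E) := by
    rw [condProb_jointYU_BSC hV]
    simp only [jointYU, jointUY, Fintype.sum_bool, unifBool, BSC, apply_true_of_flipChannel_eq hVf,
      negConj_const, Bool.not_true, Bool.false_eq_true, ↓reduceIte]
    ring
  have hQ₀ : condProb (jointYU unifBool V (BSC E)) (false, Function.const Bool true)
      = V false (Function.const Bool true) * (1 - E) + V false (Function.const Bool false) * E := by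
    rw [condProb_jointYU_BSC hV]
    simp only [jointYU, jointUY, Fintype.sum_bool, unifBool, BSC, apply_true_of_flipChannel_eq hVf,
      negConj_const, Bool.not_true, Bool.true_eq_false, ↓reduceIte]
    ring
  have hmono := mul_nonneg_of_nonpos_of_nonpos (sub_mul_logb_sub_logb_nonpos
    ((hV false).1 (Function.const Bool false)) ((hV false).1 (Function.const Bool true)) hE0 hE)
    (sub_nonpos.2 hW.2)
  rw [sum_jointYU_mul_of_flipChannel_eq hVf hW.1 hQf, sum_jointYU_mul_of_flipChannel_eq hVf hB hQf,
    hQ₁, hQ₀, eDist_BSC]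
  linarith

/-- Gibbs' inequality against the posterior of `U` given `Y` under `BSC E`. -/
theorem phi_le_phi_BSC_of_flipChannel_eq (hE0 : 0 < E) (hE : E ≤ 1 / 2) (hV : IsChannel V)
    (hVf : flipChannel V = V) (hW : W ∈ W1 unifBool hamBool E) :
    phi unifBool V W ≤ phi unifBool V (BSC E) := by
  have hB : IsChannel (BSC E) := (BSC_mem_W1 hE0.le (by linarith)).1
  have hBpos : ∀ x y, 0 < BSC E x y := fun x y => by unfold BSC; split_ifs <;> linarith
  have hT0 : ∀ W, IsChannel W → ∀ p, 0 ≤ jointYU unifBool V W p := fun W hW p =>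
    jointUY_nonneg isDist_unifBool hV hW _
  have hgibbs := condEnt_le_neg_sum_mul_logb (hT0 W hW.1) (sum_jointYU isDist_unifBool hV hW.1)
    (condProb_nonneg (hT0 _ hB)) (sum_condProb_le_one _) fun p hp =>
      (condProb_pos (hT0 _ hB) (jointUY_pos_of_ne_zero isDist_unifBool hV hBpos hp)).ne'
  have hBSC := condEnt_eq_neg_sum_mul_logb_condProb (hT0 _ hB)
  have hcross := sum_jointYU_mul_logb_condProb_le hE0 hE hV hVf hW
  rw [phi_eq_condEnt_UY_sub hW.1, phi_eq_condEnt_UY_sub hB]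
  linarith

end Binary

/-- For a flip-invariant channel the distortion on `W` is affine in `e = eDist W`, with slope
`V false id - V false not` (`dVW_eq_of_flipChannel_eq`); folding `not` into `id` makes the slope
nonnegative, so the constraint at `e = E` gives it on all of `𝒲₁(E)`, and it costs nothing at
`BSC E` because `E ≤ 1 - E`. -/
theorem exists_mem_Vrob_phi_le {D E : ℝ} (hE0 : 0 < E) (hE : E ≤ 1 / 2)
    {V : Bool → (Bool → Bool) → ℝ} (hV : V ∈ Vset unifBool hamBool (BSC E) D) :
    ∃ V' ∈ Vrob unifBool hamBool hamBool E D,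
      ∀ W ∈ W1 unifBool hamBool E, phi unifBool V' W ≤ phi unifBool V (BSC E) := by
  have hB : BSC E ∈ W1 unifBool hamBool E := BSC_mem_W1 hE0.le (by linarith)
  set Vm : Bool → (Bool → Bool) → ℝ := fun x u => (V x u + flipChannel V x u) / 2 with hVm
  have hVmc : IsChannel Vm := hV.1.midpoint hV.1.flipChannel
  have hVmf : flipChannel Vm = Vm := flipChannel_midpoint_self V
  set V' : Bool → (Bool → Bool) → ℝ := fun x => mapSum mergeNot (Vm x) with hV'
  have hV'c : IsChannel V' := hVmc.mapSum mergeNot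
  have hV'f : flipChannel V' = V' := by rw [hV', flipChannel_mapSum mergeNot_negConj, hVmf]
  refine ⟨V', ⟨hV'c, fun W hW => ?_⟩, fun W hW => ?_⟩
  · have hdm : dVW unifBool hamBool Vm (BSC E) ≤ D := by
      rw [hVm, dVW_midpoint, dVW_flipChannel_BSC]
      linarith [hV.2]
    rw [dVW_eq_of_flipChannel_eq hVmf hB.1, eDist_BSC] at hdm
    rw [dVW_eq_of_flipChannel_eq hV'f hW.1]
    simp only [hV', mapSum_mergeNot_id, mapSum_mergeNot_not, mapSum_mergeNot_const]
    have hid := (hVmc false).1 id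
    have hnot := (hVmc false).1 not
    have hm := hW.2
    nlinarith
  · calc phi unifBool V' W ≤ phi unifBool V' (BSC E) :=
          phi_le_phi_BSC_of_flipChannel_eq hE0 hE hV'c hV'f hW
      _ ≤ phi unifBool Vm (BSC E) := phi_mapSum_le isDist_unifBool hVmc hB.1 mergeNot
      _ ≤ (phi unifBool V (BSC E) + phi unifBool (flipChannel V) (BSC E)) / 2 :=
          phi_midpoint_le isDist_unifBool hV.1 hV.1.flipChannel hB.1
      _ = phi unifBool V (BSC E) := by rw [phi_flipChannel_BSC]; ring

theorem binary_hamming_general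
    (D E : ℝ) (hE0 : 0 < E) (hE : E ≤ 1 / 2)
    -- the converse bound of Theorem 1
    (hlow : sSup ((fun W => RWZ unifBool hamBool D W) '' W1 unifBool hamBool E) ≤
      Rm unifBool hamBool hamBool D E)
    -- the direct bound of Theorem 1
    (hup : Rm unifBool hamBool hamBool D E ≤
      sSup ((fun W => RWZt unifBool hamBool hamBool D E W) '' W1 unifBool hamBool E)) :
    Rm unifBool hamBool hamBool D E =
      sSup ((fun W => sInf ((fun V => phi unifBool V W) ''
        Vrob unifBool hamBool hamBool E D)) '' W1 unifBool hamBool E) ∧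
    BSC E ∈ W1 unifBool hamBool E ∧
    sInf ((fun V => phi unifBool V (BSC E)) '' Vrob unifBool hamBool hamBool E D) =
      sSup ((fun W => sInf ((fun V => phi unifBool V W) ''
        Vrob unifBool hamBool hamBool E D)) '' W1 unifBool hamBool E) := by
  have hB : BSC E ∈ W1 unifBool hamBool E := BSC_mem_W1 hE0.le (by linarith)
  have hVrob : Vrob unifBool hamBool hamBool E D ⊆ Vset unifBool hamBool (BSC E) D :=
    fun V hV => ⟨hV.1, hV.2 _ hB⟩
  have hrob : ∀ W ∈ W1 unifBool hamBool E,
      sInf ((fun V => phi unifBool V W) '' Vrob unifBool hamBool hamBool E D)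
        ≤ RWZ unifBool hamBool D (BSC E) := fun W hW =>
    sInf_image_le_sInf_image (bddBelow_phi_image isDist_unifBool hW.1 fun V hV => hV.1)
      (fun V hV => (exists_mem_Vrob_phi_le hE0 hE hV).imp fun _ h => ⟨h.1, h.2 W hW⟩)
      fun ⟨V, hV⟩ => ⟨V, hVrob hV⟩
  have hRWZ : RWZ unifBool hamBool D (BSC E)
      ≤ sInf ((fun V => phi unifBool V (BSC E)) '' Vrob unifBool hamBool hamBool E D) :=
    sInf_image_le_sInf_image (bddBelow_phi_image isDist_unifBool hB.1 fun V hV => hV.1)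
      (fun V hV => ⟨V, hVrob hV, le_rfl⟩)
      fun ⟨_, hV⟩ => (exists_mem_Vrob_phi_le hE0 hE hV).imp fun _ h => h.1
  have hsup : sSup ((fun W => sInf ((fun V => phi unifBool V W) ''
      Vrob unifBool hamBool hamBool E D)) '' W1 unifBool hamBool E)
        ≤ RWZ unifBool hamBool D (BSC E) :=
    csSup_le ⟨_, Set.mem_image_of_mem _ hB⟩ (Set.forall_mem_image.2 hrob)
  have hRWZ_le : RWZ unifBool hamBool D (BSC E)
      ≤ sSup ((fun W => RWZ unifBool hamBool D W) '' W1 unifBool hamBool E) :=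
    le_csSup (bddAbove_RWZ_image isDist_unifBool hamBool D fun W hW => hW.1)
      (Set.mem_image_of_mem _ hB)
  exact ⟨le_antisymm hup (hsup.trans (hRWZ_le.trans hlow)), hB,
    le_antisymm (le_csSup ⟨_, Set.forall_mem_image.2 hrob⟩ (Set.mem_image_of_mem _ hB))
      (hsup.trans hRWZ)⟩

/-- **binary Hamming example.** Let `𝒳 = 𝒴 = 𝒳̂ = {0,1}`, `P_X` uniform, with
both `e` and `d` the Hamming distortion, and `0 < E ≤ 1/2`.  Then the matching condition holds
and `R_m(D|E) = max_{W ∈ 𝒲₁(E)} min_{V ∈ 𝒱(E,D)} φ(V,W)`; moreover the maximizing channel is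
the binary symmetric channel `BSC(E)`.
(The two bounds of the paper's Theorem 1 are taken as hypotheses.) -/
theorem binary_hamming
    (D E : ℝ) (hD : 0 ≤ D) (hE0 : 0 < E) (hE : E ≤ 1 / 2)
    -- the converse bound of Theorem 1
    (hlow : sSup ((fun W => RWZ unifBool hamBool D W) '' W1 unifBool hamBool E) ≤
      Rm unifBool hamBool hamBool D E)
    -- the direct bound of Theorem 1
    (hup : Rm unifBool hamBool hamBool D E ≤
      sSup ((fun W => RWZt unifBool hamBool hamBool D E W) '' W1 unifBool hamBool E)) :
    Rm unifBool hamBool hamBool D E =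
      sSup ((fun W => sInf ((fun V => phi unifBool V W) ''
        Vrob unifBool hamBool hamBool E D)) '' W1 unifBool hamBool E) ∧
    BSC E ∈ W1 unifBool hamBool E ∧
    sInf ((fun V => phi unifBool V (BSC E)) '' Vrob unifBool hamBool hamBool E D) =
      sSup ((fun W => sInf ((fun V => phi unifBool V W) ''
        Vrob unifBool hamBool hamBool E D)) '' W1 unifBool hamBool E) :=
  binary_hamming_general D E hE0 hE hlow hup

end UWZ
end
end

section
/- Continuity of the Wyner–Ziv rate-distortion function in the side-information channel: for every D > 0, the map W ↦ R_WZ(D|W) is continuous on the set 𝒫(𝒴|𝒳) of channels from 𝒳 to 𝒴. In particular, |R_WZ(D|W₁) − R_WZ(D|W₂)| ≤ ν(Δ(W₁,W₂)) + ν(2ε/(D+ε)) with ε = d_max Δ(W₁,W₂) and Δ(W₁,W₂) = ∑_{x,y} |P_X(x)W₁(y|x) − P_X(x)W₂(y|x)|, where ν is a modulus of continuity (from Fannes' inequality) with ν(t) → 0 as t → 0. -/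
open scoped BigOperators

noncomputable section

namespace UWZ

/-!
Given a test channel `V` feasible for `W'`, time-sharing with the zero-distortion channel `Ṽ`,
`V_t = (1 - t) V + t Ṽ` with `t = KΔ/(D + KΔ)` and `K = ∑ |d|`, is feasible for `W`, because
`d(V,W) ≤ d(V,W') + KΔ(W,W')`; and `t → 0` as `Δ → 0`. Since `φ(V,W)` is a continuous function of
`V` and the joint law `P_X W`, it is uniformly continuous on the compact set of such pairs, so
`R_WZ(D|W) ≤ φ(V_t,W) ≤ φ(V,W') + ε` once `Δ(W,W')` is small. This uniform estimate yields
continuity, and its modulus `ν(t) = sup {|R_WZ(D|W) - R_WZ(D|W')| : Δ(W,W') ≤ t}`, finite since `φ`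
is bounded on channels, yields the quantitative bound.
-/

open Filter Topology Finset AffineMap

section Modulus

variable {α : Type*} {s : Set α} {f : α → ℝ} {Δ : α → α → ℝ}

theorem continuousOn_of_forall_abs_sub_le [TopologicalSpace α]
    (hf : ∀ ε > 0, ∃ δ > 0, ∀ a ∈ s, ∀ b ∈ s, Δ a b ≤ δ → |f a - f b| ≤ ε)
    (hΔ : ∀ b ∈ s, Tendsto (Δ · b) (𝓝[s] b) (𝓝 0)) : ContinuousOn f s := by
  intro b hb
  rw [ContinuousWithinAt, Metric.tendsto_nhds]
  intro ε hε
  obtain ⟨δ, hδ, h⟩ := hf (ε / 2) (half_pos hε)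
  filter_upwards [self_mem_nhdsWithin, (hΔ b hb).eventually (gt_mem_nhds hδ)] with a ha hab
  rw [Real.dist_eq]
  exact (h a ha b hb hab.le).trans_lt (half_lt_self hε)

theorem exists_modulus_of_forall_abs_sub_le {C : ℝ} (hC : ∀ a ∈ s, |f a| ≤ C)
    (hf : ∀ ε > 0, ∃ δ > 0, ∀ a ∈ s, ∀ b ∈ s, Δ a b ≤ δ → |f a - f b| ≤ ε) :
    ∃ ν : ℝ → ℝ, (∀ t, 0 ≤ ν t) ∧ Tendsto ν (𝓝[>] 0) (𝓝 0) ∧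
      ∀ a ∈ s, ∀ b ∈ s, |f a - f b| ≤ ν (Δ a b) := by
  set S : ℝ → Set ℝ := fun t => insert 0
    ((fun p : α × α => |f p.1 - f p.2|) '' {p | p.1 ∈ s ∧ p.2 ∈ s ∧ Δ p.1 p.2 ≤ t})
  have hS : ∀ t, BddAbove (S t) := fun t => bddAbove_insert.2 ⟨2 * C, by
    rintro _ ⟨⟨a, b⟩, ⟨ha, hb, -⟩, rfl⟩
    linarith [abs_sub (f a) (f b), hC a ha, hC b hb]⟩
  have hν0 : ∀ t, 0 ≤ sSup (S t) := fun t => le_csSup (hS t) (Set.mem_insert _ _)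
  refine ⟨fun t => sSup (S t), hν0, ?_, fun a ha b hb =>
    le_csSup (hS _) (Set.mem_insert_of_mem _ ⟨(a, b), ⟨ha, hb, le_rfl⟩, rfl⟩)⟩
  rw [Metric.tendsto_nhdsWithin_nhds]
  intro ε hε
  obtain ⟨δ, hδ, h⟩ := hf (ε / 2) (half_pos hε)
  refine ⟨δ, hδ, fun t _ htδ => ?_⟩
  have hνt : sSup (S t) ≤ ε / 2 := by
    refine csSup_le (Set.insert_nonempty _ _) ?_
    rintro _ (rfl | ⟨⟨a, b⟩, ⟨ha, hb, hab⟩, rfl⟩)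
    · positivity
    · exact h a ha b hb (hab.trans (le_abs_self t |>.trans (by simpa using htδ.le)))
  rw [Real.dist_eq, sub_zero, abs_of_nonneg (hν0 t)]
  linarith

end Modulus

section Channel

variable {A B : Type*} [Fintype A] [Fintype B]

theorem setOf_isChannel :
    {W : A → B → ℝ | IsChannel W} = Set.univ.pi fun _ => stdSimplex ℝ B := by
  ext W
  simp [IsChannel, IsDist, stdSimplex]

theorem isCompact_setOf_isChannel : IsCompact {W : A → B → ℝ | IsChannel W} := by
  rw [setOf_isChannel]
  exact isCompact_univ_pi fun _ => isCompact_stdSimplex ℝ B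

theorem convex_setOf_isChannel : Convex ℝ {W : A → B → ℝ | IsChannel W} := by
  rw [setOf_isChannel]
  exact convex_pi fun _ _ => convex_stdSimplex ℝ B

theorem IsChannel.dist_le_one {W W' : A → B → ℝ} (hW : IsChannel W) (hW' : IsChannel W') :
    dist W W' ≤ 1 :=
  (dist_pi_le_iff zero_le_one).2 fun a => (dist_pi_le_iff zero_le_one).2 fun b =>
    abs_sub_le_of_nonneg_of_le ((hW a).1 b) (mem_Icc_of_mem_stdSimplex (hW a) b).2
      ((hW' a).1 b) (mem_Icc_of_mem_stdSimplex (hW' a) b).2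

theorem abs_le_sum_sum_abs (f : A → B → ℝ) (a : A) (b : B) :
    |f a b| ≤ ∑ a, ∑ b, |f a b| :=
  (single_le_sum (f := fun b => |f a b|) (fun _ _ => abs_nonneg _) (mem_univ b)).trans
    (single_le_sum (f := fun a => ∑ b, |f a b|) (fun _ _ => by positivity) (mem_univ a))

theorem isDist_ind_eq (a₀ : A) : IsDist fun a => ind (a = a₀) := by
  classical
  exact ⟨fun a => by simp only [ind]; split_ifs <;> norm_num, by simp [ind]⟩

end Channel

@[fun_prop]
theorem continuous_ent {A : Type*} [Fintype A] : Continuous (ent (A := A)) := by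
  have h : ent (A := A) = fun P => ∑ a, Real.negMulLog (P a) / Real.log 2 := by
    funext P
    simp [ent, Real.negMulLog, Real.logb, neg_div, mul_div_assoc]
  rw [h]
  fun_prop

@[fun_prop]
theorem continuous_mutInf {A B : Type*} [Fintype A] [Fintype B] :
    Continuous (mutInf (A := A) (B := B)) := by
  unfold mutInf
  fun_prop

section WZ

variable {X Y Xh : Type*}

def joint (P : X → ℝ) (W : X → Y → ℝ) : X → Y → ℝ := fun x y => P x * W x y

theorem continuous_joint (P : X → ℝ) : Continuous (joint (Y := Y) P) := by
  unfold joint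
  fun_prop

variable [Fintype X] [Fintype Y]

/-- The paper's `Δ(W₁,W₂)`. -/
def jointDist (P : X → ℝ) (W W' : X → Y → ℝ) : ℝ :=
  ∑ x, ∑ y, |joint P W x y - joint P W' x y|

variable {P : X → ℝ}

theorem jointDist_nonneg (W W' : X → Y → ℝ) : 0 ≤ jointDist P W W' := by
  unfold jointDist
  positivity

theorem jointDist_comm (W W' : X → Y → ℝ) : jointDist P W W' = jointDist P W' W := by
  simp only [jointDist, abs_sub_comm]

theorem dist_joint_le_jointDist (W W' : X → Y → ℝ) :
    dist (joint P W) (joint P W') ≤ jointDist P W W' :=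
  (dist_pi_le_iff (jointDist_nonneg W W')).2 fun x =>
    (dist_pi_le_iff (jointDist_nonneg W W')).2 fun y =>
      abs_le_sum_sum_abs (fun x y => joint P W x y - joint P W' x y) x y

theorem tendsto_jointDist (P : X → ℝ) (W₀ : X → Y → ℝ) :
    Tendsto (jointDist P · W₀) (𝓝 W₀) (𝓝 0) :=
  Continuous.tendsto' (by unfold jointDist joint; fun_prop) W₀ 0 (by simp [jointDist])

variable [Fintype Xh] [DecidableEq Y]

/-- `φ(V,W)` as a function of `V` and the joint law `P_X W`: continuity has to be measured in the
joint law, since `Δ` does not control `W(·|x)` where `P_X(x) = 0`. -/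
def phiOfJoint (P : X → ℝ) (p : (X → (Y → Xh) → ℝ) × (X → Y → ℝ)) : ℝ :=
  mutInf (fun q : (Y → Xh) × X => P q.2 * p.1 q.2 q.1) -
    mutInf (fun q : (Y → Xh) × Y => ∑ x, p.1 x q.1 * p.2 x q.2)

theorem continuous_phiOfJoint (P : X → ℝ) : Continuous (phiOfJoint (Y := Y) (Xh := Xh) P) := by
  unfold phiOfJoint
  fun_prop

theorem phi_eq_phiOfJoint (V : X → (Y → Xh) → ℝ) (W : X → Y → ℝ) :
    phi P V W = phiOfJoint P (V, joint P W) := by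
  simp only [phi, phiOfJoint, joint, mul_assoc, mul_left_comm (P _)]

def phiDomain (P : X → ℝ) : Set ((X → (Y → Xh) → ℝ) × (X → Y → ℝ)) :=
  {V | IsChannel V} ×ˢ (joint P '' {W | IsChannel W})

theorem isCompact_phiDomain (P : X → ℝ) : IsCompact (phiDomain (Y := Y) (Xh := Xh) P) :=
  isCompact_setOf_isChannel.prod (isCompact_setOf_isChannel.image (continuous_joint P))

theorem exists_abs_phi_le (P : X → ℝ) : ∃ C, ∀ (V : X → (Y → Xh) → ℝ) (W : X → Y → ℝ),
    IsChannel V → IsChannel W → |phi P V W| ≤ C := by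
  obtain ⟨C, hC⟩ := (isCompact_phiDomain P).exists_bound_of_continuousOn
    (continuous_phiOfJoint (Y := Y) (Xh := Xh) P).continuousOn
  exact ⟨C, fun V W hV hW => by simpa [phi_eq_phiOfJoint] using hC (V, joint P W) ⟨hV, W, hW, rfl⟩⟩

variable {d : X → Xh → ℝ}

theorem dVW_lineMap (V V' : X → (Y → Xh) → ℝ) (W : X → Y → ℝ) (t : ℝ) :
    dVW P d (lineMap V V' t) W = (1 - t) * dVW P d V W + t * dVW P d V' W := by
  simp only [dVW, lineMap_apply_module, Pi.add_apply, Pi.smul_apply, smul_eq_mul, mul_sum,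
    ← sum_add_distrib]
  refine sum_congr rfl fun u _ => sum_congr rfl fun x _ => sum_congr rfl fun y _ => ?_
  ring

theorem dVW_le_add_jointDist {K : ℝ} (hK : ∀ x xh, |d x xh| ≤ K)
    {V : X → (Y → Xh) → ℝ} (hV : IsChannel V) (W W' : X → Y → ℝ) :
    dVW P d V W ≤ dVW P d V W' + K * jointDist P W W' := by
  have hdiff : dVW P d V W - dVW P d V W' =
      ∑ u, ∑ x, ∑ y, V x u * (d x (u y) * (joint P W x y - joint P W' x y)) := by
    simp only [dVW, joint, ← sum_sub_distrib]
    refine sum_congr rfl fun u _ => sum_congr rfl fun x _ => sum_congr rfl fun y _ => ?_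
    ring
  have hle : ∀ u x y, V x u * (d x (u y) * (joint P W x y - joint P W' x y)) ≤
      V x u * (K * |joint P W x y - joint P W' x y|) := fun u x y =>
    mul_le_mul_of_nonneg_left ((le_abs_self _).trans (by
      rw [abs_mul]; exact mul_le_mul_of_nonneg_right (hK _ _) (abs_nonneg _))) ((hV x).1 u)
  have hsum : ∑ u, ∑ x, ∑ y, V x u * (K * |joint P W x y - joint P W' x y|) =
      K * jointDist P W W' := by
    rw [sum_comm]
    simp only [← mul_sum, ← sum_mul, (hV _).2, one_mul, jointDist]
  linarith [sum_le_sum fun u (_ : u ∈ univ) => sum_le_sum fun x (_ : x ∈ univ) =>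
    sum_le_sum fun y (_ : y ∈ univ) => hle u x y]

theorem exists_isChannel_dVW_eq_zero (hdZ : ∀ x, ∃ xh, d x xh = 0) :
    ∃ V₀ : X → (Y → Xh) → ℝ, IsChannel V₀ ∧ ∀ W : X → Y → ℝ, dVW P d V₀ W = 0 := by
  choose c hc using hdZ
  refine ⟨fun x u => ind (u = fun _ => c x), fun x => isDist_ind_eq _, fun W => ?_⟩
  refine sum_eq_zero fun u _ => sum_eq_zero fun x _ => sum_eq_zero fun y _ => ?_
  by_cases h : u = fun _ => c x
  · simp [h, hc]
  · simp [ind, h]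

theorem lineMap_mem_Vset {D K : ℝ} (hK : ∀ x xh, |d x xh| ≤ K) (hK0 : 0 ≤ K) (hD : 0 < D)
    {V V₀ : X → (Y → Xh) → ℝ} {W W' : X → Y → ℝ} (hV : V ∈ Vset P d W' D)
    (hV₀ : IsChannel V₀) (hV₀d : dVW P d V₀ W = 0) :
    lineMap V V₀ (K * jointDist P W W' / (D + K * jointDist P W W')) ∈ Vset P d W D := by
  set Δ := jointDist P W W'
  have hKΔ : 0 ≤ K * Δ := mul_nonneg hK0 (jointDist_nonneg _ _)
  have hden : 0 < D + K * Δ := by positivity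
  have ht : K * Δ / (D + K * Δ) ≤ 1 := div_le_one_of_le₀ (by linarith) hden.le
  refine ⟨convex_setOf_isChannel.lineMap_mem hV.1 hV₀ ⟨div_nonneg hKΔ hden.le, ht⟩, ?_⟩
  rw [dVW_lineMap, hV₀d, mul_zero, add_zero]
  calc (1 - K * Δ / (D + K * Δ)) * dVW P d V W ≤ (1 - K * Δ / (D + K * Δ)) * (D + K * Δ) :=
        mul_le_mul_of_nonneg_left (by linarith [dVW_le_add_jointDist (P := P) hK hV.1 W W', hV.2])
          (sub_nonneg.2 ht)
    _ = D := by field_simp; ring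

theorem exists_abs_RWZ_le (P : X → ℝ) (d : X → Xh → ℝ) (hdZ : ∀ x, ∃ xh, d x xh = 0) {D : ℝ}
    (hD : 0 ≤ D) : ∃ C, ∀ W : X → Y → ℝ, IsChannel W → |RWZ P d D W| ≤ C := by
  obtain ⟨C, hC⟩ := exists_abs_phi_le (Y := Y) (Xh := Xh) P
  obtain ⟨V₀, hV₀, hV₀d⟩ := exists_isChannel_dVW_eq_zero (Y := Y) (P := P) hdZ
  have hV₀mem : ∀ W, V₀ ∈ Vset P d W D := fun W => ⟨hV₀, (hV₀d W).trans_le hD⟩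
  refine ⟨C, fun W hW => ?_⟩
  have hlow : -C ∈ lowerBounds ((fun V => phi P V W) '' Vset P d W D) := by
    rintro _ ⟨V, hV, rfl⟩
    exact (abs_le.1 (hC V W hV.1 hW)).1
  exact abs_le.2 ⟨le_csInf ⟨_, V₀, hV₀mem W, rfl⟩ hlow,
    (csInf_le ⟨-C, hlow⟩ ⟨V₀, hV₀mem W, rfl⟩).trans (abs_le.1 (hC V₀ W hV₀ hW)).2⟩

theorem exists_phi_lineMap_lt (P : X → ℝ) {ε : ℝ} (hε : 0 < ε) :
    ∃ η > 0, ∀ {V V₀ : X → (Y → Xh) → ℝ} {W W' : X → Y → ℝ} {t : ℝ},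
      IsChannel V → IsChannel V₀ → IsChannel W → IsChannel W' →
      t ∈ Set.Icc 0 1 → t < η → jointDist P W W' < η → phi P (lineMap V V₀ t) W < phi P V W' + ε := by
  have hunif : UniformContinuousOn (phiOfJoint (Y := Y) (Xh := Xh) P) (phiDomain P) :=
    (isCompact_phiDomain P).uniformContinuousOn_of_continuous
      (continuous_phiOfJoint P).continuousOn
  obtain ⟨η, hη, hphi⟩ := Metric.uniformContinuousOn_iff.1 hunif ε hε
  refine ⟨η, hη, fun {V V₀ W W' t} hV hV₀ hW hW' ht htη hΔη => ?_⟩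
  have hVt : IsChannel (lineMap V V₀ t) := convex_setOf_isChannel.lineMap_mem hV hV₀ ht
  have hclose : dist (lineMap V V₀ t, joint P W) (V, joint P W') < η := by
    rw [Prod.dist_eq, dist_lineMap_left, Real.norm_of_nonneg ht.1]
    refine max_lt ?_ ((dist_joint_le_jointDist W W').trans_lt hΔη)
    calc t * dist V V₀ ≤ t * 1 := mul_le_mul_of_nonneg_left (hV.dist_le_one hV₀) ht.1
      _ < η := by linarith
  have hphi' := hphi (lineMap V V₀ t, joint P W) ⟨hVt, W, hW, rfl⟩
    (V, joint P W') ⟨hV, W', hW', rfl⟩ hclose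
  rw [← phi_eq_phiOfJoint, ← phi_eq_phiOfJoint, Real.dist_eq] at hphi'
  linarith [abs_lt.1 hphi']

theorem RWZ_le_add_of_jointDist_le (hdZ : ∀ x, ∃ xh, d x xh = 0) {D : ℝ} (hD : 0 < D)
    {ε : ℝ} (hε : 0 < ε) :
    ∃ δ > 0, ∀ W W' : X → Y → ℝ, IsChannel W → IsChannel W' → jointDist P W W' ≤ δ →
      RWZ P d D W ≤ RWZ P d D W' + ε := by
  obtain ⟨C, hC⟩ := exists_abs_phi_le (Y := Y) (Xh := Xh) P
  obtain ⟨V₀, hV₀, hV₀d⟩ := exists_isChannel_dVW_eq_zero (Y := Y) (P := P) hdZ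
  obtain ⟨η, hη, hphi⟩ := exists_phi_lineMap_lt (Y := Y) (Xh := Xh) P hε
  set K := ∑ x, ∑ xh, |d x xh|
  have hK0 : 0 ≤ K := by positivity
  refine ⟨η * D / (2 * (K + D)), by positivity, fun W W' hW hW' hΔ => ?_⟩
  set Δ := jointDist P W W'
  set t := K * Δ / (D + K * Δ)
  have hΔ0 : 0 ≤ Δ := jointDist_nonneg W W'
  have h2Δ : 2 * (K + D) * Δ ≤ η * D := by
    rwa [le_div_iff₀ (by positivity), mul_comm] at hΔ
  have hΔη : Δ < η := by nlinarith
  have htη : t < η := by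
    calc t ≤ K * Δ / D := div_le_div_of_nonneg_left (by positivity) hD (by nlinarith)
      _ < η := by rw [div_lt_iff₀ hD]; nlinarith
  have hbdd : BddBelow ((fun V => phi P V W) '' Vset P d W D) :=
    ⟨-C, by rintro _ ⟨V, hV, rfl⟩; exact (abs_le.1 (hC V W hV.1 hW)).1⟩
  rw [← sub_le_iff_le_add]
  refine le_csInf ⟨_, V₀, ⟨hV₀, (hV₀d W').trans_le hD.le⟩, rfl⟩ ?_
  rintro _ ⟨V, hV, rfl⟩
  have hVt : lineMap V V₀ t ∈ Vset P d W D :=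
    lineMap_mem_Vset (abs_le_sum_sum_abs d) hK0 hD hV hV₀ (hV₀d W)
  have hRWZ : RWZ P d D W ≤ phi P (lineMap V V₀ t) W := csInf_le hbdd ⟨_, hVt, rfl⟩
  have ht : t ∈ Set.Icc 0 1 := ⟨by positivity, div_le_one_of_le₀ (by linarith) (by positivity)⟩
  linarith [hphi hV.1 hV₀ hW hW' ht htη hΔη]

theorem abs_RWZ_sub_le_of_jointDist_le (hdZ : ∀ x, ∃ xh, d x xh = 0) {D : ℝ} (hD : 0 < D) :
    ∀ ε > 0, ∃ δ > 0, ∀ W ∈ {W : X → Y → ℝ | IsChannel W}, ∀ W' ∈ {W : X → Y → ℝ | IsChannel W},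
      jointDist P W W' ≤ δ → |RWZ P d D W - RWZ P d D W'| ≤ ε := by
  intro ε hε
  obtain ⟨δ, hδ, h⟩ := RWZ_le_add_of_jointDist_le (Y := Y) (P := P) hdZ hD hε
  refine ⟨δ, hδ, fun W hW W' hW' hΔ => abs_sub_le_iff.2 ⟨?_, ?_⟩⟩
  · linarith [h W W' hW hW' hΔ]
  · linarith [h W' W hW' hW (jointDist_comm (P := P) W W' ▸ hΔ)]

end WZ

theorem RWZ_continuous_general
    {X Y Xh : Type*} [Fintype X] [Fintype Y] [Fintype Xh] [DecidableEq Y]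
    (P : X → ℝ)
    (d : X → Xh → ℝ) (dmax : ℝ)
    (hdZ : ∀ x, ∃ xh, d x xh = 0)
    (D : ℝ) (hD : 0 < D) :
    ContinuousOn (fun W : X → Y → ℝ => RWZ P d D W) {W : X → Y → ℝ | IsChannel W} ∧
    ∃ ν : ℝ → ℝ, (∀ t, 0 ≤ ν t) ∧
      Filter.Tendsto ν (nhdsWithin 0 (Set.Ioi (0:ℝ))) (nhds 0) ∧
      ∀ W₁ W₂ : X → Y → ℝ, IsChannel W₁ → IsChannel W₂ →
        |RWZ P d D W₁ - RWZ P d D W₂| ≤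
          ν (∑ x, ∑ y, |P x * W₁ x y - P x * W₂ x y|) +
          ν (2 * (dmax * ∑ x, ∑ y, |P x * W₁ x y - P x * W₂ x y|) /
             (D + dmax * ∑ x, ∑ y, |P x * W₁ x y - P x * W₂ x y|)) := by
  have hunif := abs_RWZ_sub_le_of_jointDist_le (Y := Y) (P := P) hdZ hD
  obtain ⟨C, hC⟩ := exists_abs_RWZ_le (Y := Y) P d hdZ hD.le
  obtain ⟨ν, hν0, hν, hRWZν⟩ := exists_modulus_of_forall_abs_sub_le hC hunif
  refine ⟨continuousOn_of_forall_abs_sub_le hunif fun W₀ _ =>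
      (tendsto_jointDist P W₀).mono_left nhdsWithin_le_nhds, ν, hν0, hν, fun W₁ W₂ hW₁ hW₂ => ?_⟩
  exact (hRWZν W₁ hW₁ W₂ hW₂).trans (le_add_of_nonneg_right (hν0 _))

/-- **continuity of the Wyner–Ziv rate-distortion function in the
side-information channel.** For every `D > 0`, the map `W ↦ R_WZ(D|W)` is continuous on
the set of channels from `𝒳` to `𝒴`.  In particular, there is a modulus of continuity `ν`
(with `ν(t) → 0` as `t ↓ 0`) such that
`|R_WZ(D|W₁) − R_WZ(D|W₂)| ≤ ν(Δ(W₁,W₂)) + ν(2ε/(D+ε))` with `ε = d_max Δ(W₁,W₂)` and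
`Δ(W₁,W₂) = ∑_{x,y} |P_X(x)W₁(y|x) − P_X(x)W₂(y|x)|`. -/
theorem RWZ_continuous
    {X Y Xh : Type*} [Fintype X] [Fintype Y] [Fintype Xh] [DecidableEq Y]
    [Nonempty X] [Nonempty Y] [Nonempty Xh]
    (P : X → ℝ) (hP : IsDist P)
    (d : X → Xh → ℝ) (dmax : ℝ) (hd0 : ∀ x xh, 0 ≤ d x xh)
    (hdmax : ∀ x xh, d x xh ≤ dmax) (hdZ : ∀ x, ∃ xh, d x xh = 0)
    (D : ℝ) (hD : 0 < D) :
    ContinuousOn (fun W : X → Y → ℝ => RWZ P d D W) {W : X → Y → ℝ | IsChannel W} ∧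
    ∃ ν : ℝ → ℝ, (∀ t, 0 ≤ ν t) ∧
      Filter.Tendsto ν (nhdsWithin 0 (Set.Ioi (0:ℝ))) (nhds 0) ∧
      ∀ W₁ W₂ : X → Y → ℝ, IsChannel W₁ → IsChannel W₂ →
        |RWZ P d D W₁ - RWZ P d D W₂| ≤
          ν (∑ x, ∑ y, |P x * W₁ x y - P x * W₂ x y|) +
          ν (2 * (dmax * ∑ x, ∑ y, |P x * W₁ x y - P x * W₂ x y|) /
             (D + dmax * ∑ x, ∑ y, |P x * W₁ x y - P x * W₂ x y|)) :=
  RWZ_continuous_general P d dmax hdZ D hD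

end UWZ
end
end
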